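/- arXiv:1801.03600 — 10 statements merged into one kernel-verified Lean document; each statement's English description precedes it below -/
import Mathlib

section
/- Suppose that for every k ∈ ℕ, almost surely E[X_{k+1} | 𝒢_k] ≤ (1 + η_k)·X_k − u_k^{(T)} + ∑_{j=1}^{T−1} c_j·θ_k^{(j)}·Y_k^{(j)} + μ_k^{(T)}, and for each j = 1, …, T−1, almost surely E[Y_{k+1}^{(j)} | 𝒢_k] ≤ (1 − θ_k^{(j)})·Y_k^{(j)} − u_k^{(j)} + μ_k^{(j)}; and suppose that almost surely ∑_{k=0}^∞ η_k < ∞ and ∑_{k=0}^∞ μ_k^{(j)} < ∞ for every j = 1, …, T. Then almost surely: the sequence (X_k) converges to a finite limit; for each j = 1, …, T−1 the sequence (Y_k^{(j)}) converges to a finite limit; ∑_{j=1}^{T} ∑_{k=0}^∞ u_k^{(j)} < ∞; and ∑_{k=0}^∞ ∑_{j=1}^{T−1} c_j·θ_k^{(j)}·Y_k^{(j)} < ∞. -/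
/-! With `π_k = ∏_{i<k} (1 + η_i)`, the Robbins–Siegmund inequality
`E[Z_{k+1} | 𝒢_k] ≤ (1 + η_k) Z_k - A_k + B_k` makes `Z_k / π_k + ∑_{i<k} (A_i - B_i) / π_{i+1}`
a supermartingale, bounded below by minus the predictable increasing process
`C_k = ∑_{i<k} B_i / π_{i+1}`. Stopped before `C` exceeds `n`, it is bounded below by `-n` and
converges; on `{∑ B < ∞}` one of these stopped processes never stops. Since `π` converges, `Z`
converges and `∑ A < ∞`.

The weighted combination `X + ∑_j c_j Y^{(j)}` absorbs the cross terms `c_j θ^{(j)} Y^{(j)}` and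
satisfies the Robbins–Siegmund inequality with `A = u^{(T)} + ∑_j c_j u^{(j)}` and
`B = μ^{(T)} + ∑_j c_j μ^{(j)}`; each `Y^{(j)}` satisfies it with `η = 0`,
`A = θ^{(j)} Y^{(j)} + u^{(j)}` and `B = μ^{(j)}`. -/

open MeasureTheory Filter Topology

namespace MeasureTheory

variable {Ω : Type*} {m0 : MeasurableSpace Ω} {P : Measure Ω} {𝒢 : Filtration ℕ m0}

theorem Supermartingale.exists_ae_tendsto_of_nonneg [IsFiniteMeasure P] {f : ℕ → Ω → ℝ}
    (hf : Supermartingale f 𝒢 P) (hf0 : ∀ k ω, 0 ≤ f k ω) :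
    ∀ᵐ ω ∂P, ∃ l, Tendsto (fun k => f k ω) atTop (𝓝 l) := by
  have hbdd : ∀ k, eLpNorm ((-f) k) 1 P ≤ (∫ ω, f 0 ω ∂P).toNNReal := by
    intro k
    have hint : ∫ ω, f k ω ∂P ≤ ∫ ω, f 0 ω ∂P := by
      simpa using hf.setIntegral_le (Nat.zero_le k) MeasurableSet.univ
    rw [Pi.neg_apply, eLpNorm_neg, eLpNorm_one_eq_lintegral_enorm,
      ← ofReal_integral_norm_eq_lintegral_enorm (hf.integrable k)]
    exact ENNReal.ofReal_le_ofReal (by simpa [Real.norm_of_nonneg (hf0 k _)] using hint)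
  filter_upwards [hf.neg.exists_ae_tendsto_of_bdd hbdd] with ω ⟨l, hl⟩
  exact ⟨-l, by simpa using hl.neg⟩

theorem le_of_le_hittingAfter_succ {C : ℕ → Ω → ℝ} {R : ℝ} {ω : Ω} (hC0 : C 0 ω ≤ R) {j : ℕ}
    (hj : (j : WithTop ℕ) ≤ hittingAfter (fun k => C (k + 1)) (Set.Ioi R) 0 ω) : C j ω ≤ R := by
  cases j with
  | zero => exact hC0
  | succ i =>
    have hi : (i : WithTop ℕ) < hittingAfter (fun k => C (k + 1)) (Set.Ioi R) 0 ω :=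
      lt_of_lt_of_le (WithTop.coe_lt_coe.2 i.lt_succ_self) hj
    simpa using notMem_of_lt_hittingAfter hi (Nat.zero_le i)

theorem Supermartingale.ae_exists_tendsto_of_neg_predictable_le [IsFiniteMeasure P]
    {W C : ℕ → Ω → ℝ} (hW : Supermartingale W 𝒢 P) (hC : Adapted 𝒢 fun k => C (k + 1))
    (hC0 : ∀ ω, C 0 ω = 0) (hWC : ∀ k ω, -C k ω ≤ W k ω) :
    ∀ᵐ ω ∂P, BddAbove (Set.range fun k => C k ω) →
      ∃ l, Tendsto (fun k => W k ω) atTop (𝓝 l) := by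
  set τ : ℕ → Ω → WithTop ℕ := fun n => hittingAfter (fun k => C (k + 1)) (Set.Ioi (n : ℝ)) 0
  have hτ : ∀ n, IsStoppingTime 𝒢 (τ n) := fun n =>
    hC.isStoppingTime_hittingAfter measurableSet_Ioi
  have hstopped_ge : ∀ (n k : ℕ) ω, -(n : ℝ) ≤ stoppedProcess W (τ n) k ω := by
    intro n k ω
    have hCτ : ∀ j : ℕ, (j : WithTop ℕ) ≤ τ n ω → -(n : ℝ) ≤ W j ω := fun j hj =>
      (neg_le_neg (le_of_le_hittingAfter_succ (by simp [hC0]) hj)).trans (hWC j ω)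
    rcases le_or_gt (k : WithTop ℕ) (τ n ω) with hk | hk
    · rw [stoppedProcess_eq_of_le (i := k) hk]
      exact hCτ k hk
    · obtain ⟨j, hj⟩ := WithTop.ne_top_iff_exists.1 (ne_top_of_lt hk)
      rw [stoppedProcess_eq_of_ge (i := k) hk.le, ← hj]
      exact hCτ j hj.le
  have hstopped : ∀ n, ∀ᵐ ω ∂P, ∃ l,
      Tendsto (fun k => stoppedProcess W (τ n) k ω + n) atTop (𝓝 l) := by
    intro n
    have hsuper : Supermartingale (stoppedProcess W (τ n)) 𝒢 P := by
      simpa using (hW.neg.stoppedProcess (hτ n)).neg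
    refine (hsuper.add_martingale (martingale_const 𝒢 P (n : ℝ))).exists_ae_tendsto_of_nonneg
      fun k ω => ?_
    show 0 ≤ stoppedProcess W (τ n) k ω + n
    linarith [hstopped_ge n k ω]
  filter_upwards [ae_all_iff.2 hstopped] with ω hω ⟨R, hR⟩
  obtain ⟨n, hn⟩ := exists_nat_ge R
  obtain ⟨l, hl⟩ := hω n
  have hτtop : τ n ω = ⊤ := hittingAfter_eq_top_iff.2 fun j _ =>
    not_lt.2 ((hR ⟨j + 1, rfl⟩).trans hn)
  refine ⟨l - n, (hl.sub_const (n : ℝ)).congr fun k => ?_⟩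
  rw [stoppedProcess_eq_of_le (by simp [hτtop])]
  ring

theorem condExp_mul_add_ae_eq [IsFiniteMeasure P] {m : MeasurableSpace Ω} (hm : m ≤ m0)
    {g f h : Ω → ℝ} (hg : StronglyMeasurable[m] g) (hh : StronglyMeasurable[m] h)
    (hf : Integrable f P) (hgf : Integrable (g * f) P) (hhi : Integrable h P) :
    P[g * f + h | m] =ᵐ[P] g * P[f | m] + h := by
  filter_upwards [condExp_add hgf hhi m, condExp_mul_of_stronglyMeasurable_left hg hgf hf]
    with ω hadd hmul
  rw [hadd, Pi.add_apply, hmul, condExp_of_stronglyMeasurable hm hh hhi]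
  rfl

end MeasureTheory

namespace RobbinsSiegmund

variable {Ω : Type*} {m0 : MeasurableSpace Ω} {P : Measure Ω} {𝒢 : Filtration ℕ m0}

noncomputable def discount (η : ℕ → Ω → ℝ) (k : ℕ) (ω : Ω) : ℝ :=
  (∏ i ∈ Finset.range k, (1 + η i ω))⁻¹

noncomputable def discountedSum (η A : ℕ → Ω → ℝ) (k : ℕ) (ω : Ω) : ℝ :=
  ∑ i ∈ Finset.range k, discount η (i + 1) ω * A i ω

variable {η A : ℕ → Ω → ℝ}

lemma one_le_prod_one_add (hη : ∀ k ω, 0 ≤ η k ω) (k : ℕ) (ω : Ω) :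
    1 ≤ ∏ i ∈ Finset.range k, (1 + η i ω) :=
  Finset.one_le_prod fun i _ => le_add_of_nonneg_right (hη i ω)

lemma discount_pos (hη : ∀ k ω, 0 ≤ η k ω) (k : ℕ) (ω : Ω) : 0 < discount η k ω :=
  inv_pos.2 (zero_lt_one.trans_le (one_le_prod_one_add hη k ω))

lemma discount_le_one (hη : ∀ k ω, 0 ≤ η k ω) (k : ℕ) (ω : Ω) : discount η k ω ≤ 1 :=
  inv_le_one_of_one_le₀ (one_le_prod_one_add hη k ω)

lemma discount_succ_mul (hη : ∀ k ω, 0 ≤ η k ω) (k : ℕ) (ω : Ω) :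
    discount η (k + 1) ω * (1 + η k ω) = discount η k ω := by
  have : 1 + η k ω ≠ 0 := by linarith [hη k ω]
  simp only [discount, Finset.prod_range_succ, mul_inv, mul_assoc, inv_mul_cancel₀ this, mul_one]

lemma measurable_discount (hη : Adapted 𝒢 η) {n k : ℕ} (hnk : n ≤ k + 1) :
    Measurable[𝒢 k] (discount η n) :=
  (Finset.measurable_prod _ fun i hi => measurable_const.add
    ((hη i).mono (𝒢.mono (by grind)) le_rfl)).inv

lemma measurable_discountedSum (hη : Adapted 𝒢 η) (hA : Adapted 𝒢 A) {n k : ℕ}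
    (hnk : n ≤ k + 1) : Measurable[𝒢 k] (discountedSum η A n) :=
  Finset.measurable_sum _ fun i hi => (measurable_discount hη (by grind)).mul
    ((hA i).mono (𝒢.mono (by grind)) le_rfl)

lemma integrable_discount_mul (hη0 : ∀ k ω, 0 ≤ η k ω) (hη : Adapted 𝒢 η) {f : Ω → ℝ}
    (hf : Integrable f P) (n : ℕ) : Integrable (fun ω => discount η n ω * f ω) P :=
  hf.bdd_mul ((measurable_discount hη n.le_succ).mono (𝒢.le n) le_rfl).aestronglyMeasurable
    (c := 1) (ae_of_all _ fun ω => by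
      rw [Real.norm_of_nonneg (discount_pos hη0 n ω).le]; exact discount_le_one hη0 n ω)

lemma integrable_discountedSum (hη0 : ∀ k ω, 0 ≤ η k ω) (hη : Adapted 𝒢 η)
    (hA : ∀ k, Integrable (A k) P) (n : ℕ) : Integrable (discountedSum η A n) P := by
  unfold discountedSum
  exact integrable_finsetSum _ fun i _ => integrable_discount_mul hη0 hη (hA i) (i + 1)

lemma discountedSum_nonneg (hη : ∀ k ω, 0 ≤ η k ω) (hA : ∀ k ω, 0 ≤ A k ω) (n : ℕ) (ω : Ω) :
    0 ≤ discountedSum η A n ω :=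
  Finset.sum_nonneg fun i _ => mul_nonneg (discount_pos hη _ ω).le (hA i ω)

lemma summable_discount_mul (hη : ∀ k ω, 0 ≤ η k ω) (hA0 : ∀ k ω, 0 ≤ A k ω) {ω : Ω}
    (hA : Summable (A · ω)) : Summable fun i => discount η (i + 1) ω * A i ω :=
  hA.of_nonneg_of_le (fun i => mul_nonneg (discount_pos hη _ ω).le (hA0 i ω))
    fun i => mul_le_of_le_one_left (hA0 i ω) (discount_le_one hη _ ω)

variable {Z B : ℕ → Ω → ℝ}

lemma exists_tendsto_and_summable_of_tendsto (hη0 : ∀ k ω, 0 ≤ η k ω) (hZ0 : ∀ k ω, 0 ≤ Z k ω)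
    (hA0 : ∀ k ω, 0 ≤ A k ω) {ω : Ω} (hη : Summable (η · ω)) {v : ℝ}
    (hv : Tendsto (fun k => discount η k ω * Z k ω + discountedSum η A k ω) atTop (𝓝 v)) :
    (∃ l, Tendsto (Z · ω) atTop (𝓝 l)) ∧ Summable (A · ω) := by
  have hprod : Tendsto (fun k => (discount η k ω)⁻¹) atTop
      (𝓝 (∏' i, (1 + η i ω))) := by
    simpa [discount] using (Real.multipliable_one_add_of_summable hη).tendsto_prod_tprod_nat
  obtain ⟨M, hM⟩ := hprod.bddAbove_range
  obtain ⟨V, hV⟩ := hv.bddAbove_range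
  have hdA : Summable fun i => discount η (i + 1) ω * A i ω := by
    refine summable_of_sum_range_le (c := V)
      (fun i => mul_nonneg (discount_pos hη0 _ ω).le (hA0 i ω)) fun k => ?_
    have := mul_nonneg (discount_pos hη0 k ω).le (hZ0 k ω)
    have := hV ⟨k, rfl⟩
    simp only [discountedSum] at *
    linarith
  have hinv_mul : ∀ k (x : ℝ), (discount η k ω)⁻¹ * (discount η k ω * x) = x := fun k x =>
    inv_mul_cancel_left₀ (discount_pos hη0 k ω).ne' x
  refine ⟨⟨_, (hprod.mul (hv.sub hdA.hasSum.tendsto_sum_nat)).congr fun k => ?_⟩, ?_⟩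
  · simp [discountedSum, hinv_mul]
  · refine (hdA.mul_left M).of_nonneg_of_le (fun i => hA0 i ω) fun i => ?_
    calc A i ω = (discount η (i + 1) ω)⁻¹ * (discount η (i + 1) ω * A i ω) :=
          (hinv_mul (i + 1) (A i ω)).symm
      _ ≤ M * (discount η (i + 1) ω * A i ω) :=
          mul_le_mul_of_nonneg_right (hM ⟨i + 1, rfl⟩)
            (mul_nonneg (discount_pos hη0 _ ω).le (hA0 i ω))

theorem supermartingale_discounted [IsFiniteMeasure P] (hη0 : ∀ k ω, 0 ≤ η k ω)
    (hZi : ∀ k, Integrable (Z k) P) (hAi : ∀ k, Integrable (A k) P)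
    (hBi : ∀ k, Integrable (B k) P) (hZa : Adapted 𝒢 Z) (hηa : Adapted 𝒢 η)
    (hAa : Adapted 𝒢 A) (hBa : Adapted 𝒢 B)
    (hrec : ∀ k, ∀ᵐ ω ∂P, P[Z (k + 1) | 𝒢 k] ω ≤ (1 + η k ω) * Z k ω - A k ω + B k ω) :
    Supermartingale (fun k ω => discount η k ω * Z k ω + discountedSum η A k ω
      - discountedSum η B k ω) 𝒢 P := by
  have hD : ∀ n k, n ≤ k + 1 →
      Measurable[𝒢 k] fun ω => discountedSum η A n ω - discountedSum η B n ω := fun n k h =>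
    (measurable_discountedSum hηa hAa h).sub (measurable_discountedSum hηa hBa h)
  have hDi : ∀ n, Integrable (fun ω => discountedSum η A n ω - discountedSum η B n ω) P :=
    fun n => (integrable_discountedSum hη0 hηa hAi n).sub (integrable_discountedSum hη0 hηa hBi n)
  refine supermartingale_nat (fun k => ?_) (fun k => ?_) fun k => ?_
  · simp_rw [add_sub_assoc]
    exact (((measurable_discount hηa k.le_succ).mul (hZa k)).add
      (hD k k k.le_succ)).stronglyMeasurable
  · simp_rw [add_sub_assoc]
    exact (integrable_discount_mul hη0 hηa (hZi k) k).add (hDi k)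
  · have hsplit : (fun ω => discount η (k + 1) ω * Z (k + 1) ω + discountedSum η A (k + 1) ω
        - discountedSum η B (k + 1) ω) = discount η (k + 1) * Z (k + 1)
          + fun ω => discountedSum η A (k + 1) ω - discountedSum η B (k + 1) ω := by
      funext ω
      simp only [Pi.add_apply, Pi.mul_apply]
      ring
    rw [hsplit]
    filter_upwards [condExp_mul_add_ae_eq (𝒢.le k)
      (measurable_discount hηa le_rfl).stronglyMeasurable
      (hD (k + 1) k le_rfl).stronglyMeasurable (hZi (k + 1))
      (integrable_discount_mul hη0 hηa (hZi (k + 1)) (k + 1)) (hDi (k + 1)), hrec k]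
      with ω hcond hZ
    rw [hcond]
    have := mul_le_mul_of_nonneg_left hZ (discount_pos hη0 (k + 1) ω).le
    simp only [Pi.add_apply, Pi.mul_apply, discountedSum, Finset.sum_range_succ,
      ← discount_succ_mul hη0 k ω]
    linarith

theorem robbins_siegmund [IsFiniteMeasure P] (hZ0 : ∀ k ω, 0 ≤ Z k ω) (hη0 : ∀ k ω, 0 ≤ η k ω)
    (hA0 : ∀ k ω, 0 ≤ A k ω) (hB0 : ∀ k ω, 0 ≤ B k ω)
    (hZi : ∀ k, Integrable (Z k) P) (hAi : ∀ k, Integrable (A k) P)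
    (hBi : ∀ k, Integrable (B k) P) (hZa : Adapted 𝒢 Z) (hηa : Adapted 𝒢 η)
    (hAa : Adapted 𝒢 A) (hBa : Adapted 𝒢 B)
    (hrec : ∀ k, ∀ᵐ ω ∂P, P[Z (k + 1) | 𝒢 k] ω ≤ (1 + η k ω) * Z k ω - A k ω + B k ω)
    (hηsum : ∀ᵐ ω ∂P, Summable (η · ω)) (hBsum : ∀ᵐ ω ∂P, Summable (B · ω)) :
    ∀ᵐ ω ∂P, (∃ l, Tendsto (Z · ω) atTop (𝓝 l)) ∧ Summable (A · ω) := by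
  have hW := (supermartingale_discounted hη0 hZi hAi hBi hZa hηa hAa hBa hrec
    ).ae_exists_tendsto_of_neg_predictable_le (C := discountedSum η B)
    (fun k => measurable_discountedSum hηa hBa le_rfl) (by simp [discountedSum])
    fun k ω => by
      linarith [mul_nonneg (discount_pos hη0 k ω).le (hZ0 k ω), discountedSum_nonneg hη0 hA0 k ω]
  filter_upwards [hW, hηsum, hBsum] with ω hWω hη hB
  have hC : Tendsto (discountedSum η B · ω) atTop (𝓝 _) :=
    (summable_discount_mul hη0 hB0 hB).hasSum.tendsto_sum_nat
  obtain ⟨w, hw⟩ := hWω hC.bddAbove_range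
  exact exists_tendsto_and_summable_of_tendsto hη0 hZ0 hA0 hη ((hw.add hC).congr fun k => by ring)

theorem robbins_siegmund_one_sub [IsFiniteMeasure P] {θ : ℕ → Ω → ℝ} (hZ0 : ∀ k ω, 0 ≤ Z k ω)
    (hθ0 : ∀ k ω, 0 ≤ θ k ω) (hA0 : ∀ k ω, 0 ≤ A k ω) (hB0 : ∀ k ω, 0 ≤ B k ω)
    (hZi : ∀ k, Integrable (Z k) P) (hθZi : ∀ k, Integrable (fun ω => θ k ω * Z k ω) P)
    (hAi : ∀ k, Integrable (A k) P) (hBi : ∀ k, Integrable (B k) P) (hZa : Adapted 𝒢 Z)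
    (hθa : Adapted 𝒢 θ) (hAa : Adapted 𝒢 A) (hBa : Adapted 𝒢 B)
    (hrec : ∀ k, ∀ᵐ ω ∂P, P[Z (k + 1) | 𝒢 k] ω ≤ (1 - θ k ω) * Z k ω - A k ω + B k ω)
    (hBsum : ∀ᵐ ω ∂P, Summable (B · ω)) :
    ∀ᵐ ω ∂P, (∃ l, Tendsto (Z · ω) atTop (𝓝 l)) ∧
      Summable fun k => θ k ω * Z k ω + A k ω :=
  robbins_siegmund (η := 0) hZ0 (fun _ _ => le_rfl)
    (fun k ω => add_nonneg (mul_nonneg (hθ0 k ω) (hZ0 k ω)) (hA0 k ω)) hB0 hZi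
    (fun k => (hθZi k).add (hAi k)) hBi hZa (fun _ => measurable_const)
    (fun k => ((hθa k).mul (hZa k)).add (hAa k)) hBa
    (fun k => by filter_upwards [hrec k] with ω hω; simp only [Pi.zero_apply]; linarith)
    (ae_of_all _ fun _ => summable_zero) hBsum

end RobbinsSiegmund

section WeightedSum

variable {Ω ι : Type*} {m0 : MeasurableSpace Ω} {P : Measure Ω} {𝒢 : Filtration ℕ m0}
  {s : Finset ι} {c : ι → ℝ} {X : ℕ → Ω → ℝ} {Y : ι → ℕ → Ω → ℝ}

def weightedSum (s : Finset ι) (c : ι → ℝ) (X : ℕ → Ω → ℝ) (Y : ι → ℕ → Ω → ℝ) (k : ℕ) (ω : Ω) :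
    ℝ :=
  X k ω + ∑ j ∈ s, c j * Y j k ω

lemma sum_mul_nonneg_of_nonneg (hc : ∀ j ∈ s, 0 ≤ c j) (hY : ∀ j ∈ s, ∀ k ω, 0 ≤ Y j k ω)
    (k : ℕ) (ω : Ω) : 0 ≤ ∑ j ∈ s, c j * Y j k ω :=
  Finset.sum_nonneg fun j hj => mul_nonneg (hc j hj) (hY j hj k ω)

lemma le_weightedSum (hc : ∀ j ∈ s, 0 ≤ c j) (hY : ∀ j ∈ s, ∀ k ω, 0 ≤ Y j k ω) (k : ℕ) (ω : Ω) :
    X k ω ≤ weightedSum s c X Y k ω :=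
  le_add_of_nonneg_right (sum_mul_nonneg_of_nonneg hc hY k ω)

lemma weightedSum_nonneg (hc : ∀ j ∈ s, 0 ≤ c j) (hX : ∀ k ω, 0 ≤ X k ω)
    (hY : ∀ j ∈ s, ∀ k ω, 0 ≤ Y j k ω) (k : ℕ) (ω : Ω) : 0 ≤ weightedSum s c X Y k ω :=
  (hX k ω).trans (le_weightedSum hc hY k ω)

lemma integrable_weightedSum (hX : ∀ k, Integrable (X k) P)
    (hY : ∀ j ∈ s, ∀ k, Integrable (Y j k) P) (k : ℕ) : Integrable (weightedSum s c X Y k) P :=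
  (hX k).add (integrable_finsetSum _ fun j hj => (hY j hj k).const_mul (c j))

lemma adapted_weightedSum (hX : Adapted 𝒢 X) (hY : ∀ j ∈ s, Adapted 𝒢 (Y j)) :
    Adapted 𝒢 (weightedSum s c X Y) := fun k =>
  (hX k).add (Finset.measurable_sum _ fun j hj => (hY j hj k).const_mul (c j))

lemma summable_weightedSum {ω : Ω} (hX : Summable (X · ω)) (hY : ∀ j ∈ s, Summable (Y j · ω)) :
    Summable (weightedSum s c X Y · ω) :=
  hX.add (summable_sum fun j hj => (hY j hj).mul_left (c j))

lemma exists_tendsto_of_weightedSum {ω : Ω}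
    (hS : ∃ l, Tendsto (weightedSum s c X Y · ω) atTop (𝓝 l))
    (hY : ∀ j ∈ s, ∃ l, Tendsto (Y j · ω) atTop (𝓝 l)) :
    ∃ l, Tendsto (X · ω) atTop (𝓝 l) := by
  obtain ⟨l, hl⟩ := hS
  choose! L hL using hY
  exact ⟨_, (hl.sub (tendsto_finsetSum s fun j hj => (hL j hj).const_mul (c j))).congr
    fun k => by simp [weightedSum]⟩

theorem condExp_weightedSum_le [IsFiniteMeasure P] (hc : ∀ j ∈ s, 0 ≤ c j)
    {η uX μX : ℕ → Ω → ℝ} {θ u μ : ι → ℕ → Ω → ℝ} (hη : ∀ k ω, 0 ≤ η k ω)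
    (hY0 : ∀ j ∈ s, ∀ k ω, 0 ≤ Y j k ω)
    (hXi : ∀ k, Integrable (X k) P) (hYi : ∀ j ∈ s, ∀ k, Integrable (Y j k) P)
    (hXrec : ∀ k, ∀ᵐ ω ∂P, P[X (k + 1) | 𝒢 k] ω ≤
      (1 + η k ω) * X k ω - uX k ω + (∑ j ∈ s, c j * θ j k ω * Y j k ω) + μX k ω)
    (hYrec : ∀ j ∈ s, ∀ k, ∀ᵐ ω ∂P,
      P[Y j (k + 1) | 𝒢 k] ω ≤ (1 - θ j k ω) * Y j k ω - u j k ω + μ j k ω) (k : ℕ) :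
    ∀ᵐ ω ∂P, P[weightedSum s c X Y (k + 1) | 𝒢 k] ω ≤
      (1 + η k ω) * weightedSum s c X Y k ω - weightedSum s c uX u k ω
        + weightedSum s c μX μ k ω := by
  have hsplit : weightedSum s c X Y (k + 1) = X (k + 1) + ∑ j ∈ s, c j • Y j (k + 1) := by
    funext ω
    simp [weightedSum, Finset.sum_apply]
  have hlin : P[weightedSum s c X Y (k + 1) | 𝒢 k] =ᵐ[P]
      P[X (k + 1) | 𝒢 k] + ∑ j ∈ s, c j • P[Y j (k + 1) | 𝒢 k] := by
    rw [hsplit]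
    refine (condExp_add (hXi _) (integrable_finsetSum' _ fun j hj => (hYi j hj _).smul (c j))
      _).trans ((EventuallyEq.refl _ _).add ?_)
    refine (condExp_finsetSum (fun j hj => (hYi j hj _).smul (c j)) _).trans ?_
    exact eventuallyEq_sum fun j _ => condExp_smul (c j) _ _
  filter_upwards [hlin, hXrec k, (eventually_all_finset s).2 fun j hj => hYrec j hj k]
    with ω hω hX hY
  have hsum : ∑ j ∈ s, c j * P[Y j (k + 1) | 𝒢 k] ω ≤
      ∑ j ∈ s, (c j * Y j k ω - c j * θ j k ω * Y j k ω - c j * u j k ω + c j * μ j k ω) :=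
    Finset.sum_le_sum fun j hj => by linarith [mul_le_mul_of_nonneg_left (hY j hj) (hc j hj)]
  have hηY := mul_nonneg (hη k ω) (sum_mul_nonneg_of_nonneg hc hY0 k ω)
  simp only [Finset.sum_add_distrib, Finset.sum_sub_distrib] at hsum
  simp only [hω, Pi.add_apply, Finset.sum_apply, Pi.smul_apply, smul_eq_mul, weightedSum]
  linarith

end WeightedSum

open RobbinsSiegmund

theorem stmt_0_general {Ω : Type*} {m0 : MeasurableSpace Ω} (P : Measure Ω) [IsProbabilityMeasure P]
    (𝒢 : Filtration ℕ m0)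
    (T : ℕ) (hT : 2 ≤ T)
    (c : ℕ → ℝ) (hc : ∀ j ∈ Finset.Icc 1 (T - 1), 0 < c j)
    (X η : ℕ → Ω → ℝ)
    (u μ : ℕ → ℕ → Ω → ℝ)   -- u j k, μ j k for levels j = 1, …, T
    (Y θ : ℕ → ℕ → Ω → ℝ)   -- Y j k, θ j k for levels j = 1, …, T − 1
    -- nonnegativity
    (hX0 : ∀ k ω, 0 ≤ X k ω) (hη0 : ∀ k ω, 0 ≤ η k ω)
    (hu0 : ∀ j ∈ Finset.Icc 1 T, ∀ k ω, 0 ≤ u j k ω)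
    (hμ0 : ∀ j ∈ Finset.Icc 1 T, ∀ k ω, 0 ≤ μ j k ω)
    (hY0 : ∀ j ∈ Finset.Icc 1 (T - 1), ∀ k ω, 0 ≤ Y j k ω)
    (hθ0 : ∀ j ∈ Finset.Icc 1 (T - 1), ∀ k ω, 0 ≤ θ j k ω)
    -- integrability
    (hXi : ∀ k, Integrable (X k) P)
    (hui : ∀ j ∈ Finset.Icc 1 T, ∀ k, Integrable (u j k) P)
    (hμi : ∀ j ∈ Finset.Icc 1 T, ∀ k, Integrable (μ j k) P)
    (hYi : ∀ j ∈ Finset.Icc 1 (T - 1), ∀ k, Integrable (Y j k) P)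
    (hθYi : ∀ j ∈ Finset.Icc 1 (T - 1), ∀ k,
      Integrable (fun ω => θ j k ω * Y j k ω) P)
    -- adaptedness to the filtration
    (hXa : Adapted 𝒢 X) (hηa : Adapted 𝒢 η)
    (hua : ∀ j ∈ Finset.Icc 1 T, Adapted 𝒢 (u j))
    (hμa : ∀ j ∈ Finset.Icc 1 T, Adapted 𝒢 (μ j))
    (hYa : ∀ j ∈ Finset.Icc 1 (T - 1), Adapted 𝒢 (Y j))
    (hθa : ∀ j ∈ Finset.Icc 1 (T - 1), Adapted 𝒢 (θ j))
    -- the supermartingale-type conditional-expectation inequalities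
    (hXrec : ∀ k, ∀ᵐ ω ∂P, (P[X (k + 1) | 𝒢 k]) ω ≤
      (1 + η k ω) * X k ω - u T k ω
        + (∑ j ∈ Finset.Icc 1 (T - 1), c j * θ j k ω * Y j k ω) + μ T k ω)
    (hYrec : ∀ j ∈ Finset.Icc 1 (T - 1), ∀ k, ∀ᵐ ω ∂P,
      (P[Y j (k + 1) | 𝒢 k]) ω ≤ (1 - θ j k ω) * Y j k ω - u j k ω + μ j k ω)
    -- almost sure summability of η and of the μ's
    (hηsum : ∀ᵐ ω ∂P, Summable (fun k => η k ω))
    (hμsum : ∀ j ∈ Finset.Icc 1 T, ∀ᵐ ω ∂P, Summable (fun k => μ j k ω)) :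
    ∀ᵐ ω ∂P,
      (∃ l : ℝ, Tendsto (fun k => X k ω) atTop (nhds l)) ∧
      (∀ j ∈ Finset.Icc 1 (T - 1), ∃ l : ℝ,
        Tendsto (fun k => Y j k ω) atTop (nhds l)) ∧
      (∀ j ∈ Finset.Icc 1 T, Summable (fun k => u j k ω)) ∧
      Summable (fun k => ∑ j ∈ Finset.Icc 1 (T - 1), c j * θ j k ω * Y j k ω) := by
  set s := Finset.Icc 1 (T - 1)
  have hTT : T ∈ Finset.Icc 1 T := Finset.mem_Icc.2 ⟨by omega, le_rfl⟩
  have hsT : ∀ j ∈ s, j ∈ Finset.Icc 1 T := fun j hj => by grind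
  have hc0 : ∀ j ∈ s, 0 ≤ c j := fun j hj => (hc j hj).le
  have hS := robbins_siegmund (P := P) (Z := weightedSum s c X Y) (η := η)
    (A := weightedSum s c (u T) u) (B := weightedSum s c (μ T) μ)
    (weightedSum_nonneg hc0 hX0 hY0) hη0
    (weightedSum_nonneg hc0 (hu0 T hTT) fun j hj => hu0 j (hsT j hj))
    (weightedSum_nonneg hc0 (hμ0 T hTT) fun j hj => hμ0 j (hsT j hj))
    (integrable_weightedSum hXi hYi)
    (integrable_weightedSum (hui T hTT) fun j hj => hui j (hsT j hj))
    (integrable_weightedSum (hμi T hTT) fun j hj => hμi j (hsT j hj))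
    (adapted_weightedSum hXa hYa) hηa
    (adapted_weightedSum (hua T hTT) fun j hj => hua j (hsT j hj))
    (adapted_weightedSum (hμa T hTT) fun j hj => hμa j (hsT j hj))
    (condExp_weightedSum_le hc0 hη0 hY0 hXi hYi hXrec hYrec) hηsum
    (by filter_upwards [(eventually_all_finset _).2 hμsum] with ω hω
        exact summable_weightedSum (hω T hTT) fun j hj => hω j (hsT j hj))
  have hY : ∀ j ∈ s, ∀ᵐ ω ∂P, (∃ l, Tendsto (Y j · ω) atTop (𝓝 l)) ∧
      Summable fun k => θ j k ω * Y j k ω + u j k ω := fun j hj =>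
    robbins_siegmund_one_sub (hY0 j hj) (hθ0 j hj) (hu0 j (hsT j hj)) (hμ0 j (hsT j hj))
      (hYi j hj) (hθYi j hj) (hui j (hsT j hj)) (hμi j (hsT j hj)) (hYa j hj) (hθa j hj)
      (hua j (hsT j hj)) (hμa j (hsT j hj)) (hYrec j hj) (hμsum j (hsT j hj))
  filter_upwards [hS, (eventually_all_finset s).2 hY] with ω ⟨hSω, huT⟩ hYω
  have hθY : ∀ j ∈ s, Summable fun k => θ j k ω * Y j k ω := fun j hj =>
    (hYω j hj).2.of_nonneg_of_le (fun k => mul_nonneg (hθ0 j hj k ω) (hY0 j hj k ω))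
      fun k => le_add_of_nonneg_right (hu0 j (hsT j hj) k ω)
  refine ⟨exists_tendsto_of_weightedSum hSω fun j hj => (hYω j hj).1,
    fun j hj => (hYω j hj).1, fun j hj => ?_, summable_sum fun j hj => ?_⟩
  · rcases eq_or_ne j T with rfl | hjT
    · exact huT.of_nonneg_of_le (hu0 j hj · ω)
        (le_weightedSum hc0 (fun j hj => hu0 j (hsT j hj)) · ω)
    · exact (hYω j (by grind)).2.of_nonneg_of_le (hu0 j hj · ω)
        fun k => le_add_of_nonneg_left (mul_nonneg (hθ0 j (by grind) k ω) (hY0 j (by grind) k ω))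
  · simpa only [mul_assoc] using (hθY j hj).mul_left (c j)

theorem stmt_0 {Ω : Type*} {m0 : MeasurableSpace Ω} (P : Measure Ω) [IsProbabilityMeasure P]
    (𝒢 : Filtration ℕ m0)
    (T : ℕ) (hT : 2 ≤ T)
    (c : ℕ → ℝ) (hc : ∀ j ∈ Finset.Icc 1 (T - 1), 0 < c j)
    (X η : ℕ → Ω → ℝ)
    (u μ : ℕ → ℕ → Ω → ℝ)   -- u j k, μ j k for levels j = 1, …, T
    (Y θ : ℕ → ℕ → Ω → ℝ)   -- Y j k, θ j k for levels j = 1, …, T − 1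
    -- nonnegativity
    (hX0 : ∀ k ω, 0 ≤ X k ω) (hη0 : ∀ k ω, 0 ≤ η k ω)
    (hu0 : ∀ j ∈ Finset.Icc 1 T, ∀ k ω, 0 ≤ u j k ω)
    (hμ0 : ∀ j ∈ Finset.Icc 1 T, ∀ k ω, 0 ≤ μ j k ω)
    (hY0 : ∀ j ∈ Finset.Icc 1 (T - 1), ∀ k ω, 0 ≤ Y j k ω)
    (hθ0 : ∀ j ∈ Finset.Icc 1 (T - 1), ∀ k ω, 0 ≤ θ j k ω)
    -- integrability
    (hXi : ∀ k, Integrable (X k) P) (hηi : ∀ k, Integrable (η k) P)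
    (hui : ∀ j ∈ Finset.Icc 1 T, ∀ k, Integrable (u j k) P)
    (hμi : ∀ j ∈ Finset.Icc 1 T, ∀ k, Integrable (μ j k) P)
    (hYi : ∀ j ∈ Finset.Icc 1 (T - 1), ∀ k, Integrable (Y j k) P)
    (hθi : ∀ j ∈ Finset.Icc 1 (T - 1), ∀ k, Integrable (θ j k) P)
    (hθYi : ∀ j ∈ Finset.Icc 1 (T - 1), ∀ k,
      Integrable (fun ω => θ j k ω * Y j k ω) P)
    (hηXi : ∀ k, Integrable (fun ω => η k ω * X k ω) P)
    -- adaptedness to the filtration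
    (hXa : Adapted 𝒢 X) (hηa : Adapted 𝒢 η)
    (hua : ∀ j ∈ Finset.Icc 1 T, Adapted 𝒢 (u j))
    (hμa : ∀ j ∈ Finset.Icc 1 T, Adapted 𝒢 (μ j))
    (hYa : ∀ j ∈ Finset.Icc 1 (T - 1), Adapted 𝒢 (Y j))
    (hθa : ∀ j ∈ Finset.Icc 1 (T - 1), Adapted 𝒢 (θ j))
    -- the supermartingale-type conditional-expectation inequalities
    (hXrec : ∀ k, ∀ᵐ ω ∂P, (P[X (k + 1) | 𝒢 k]) ω ≤
      (1 + η k ω) * X k ω - u T k ω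
        + (∑ j ∈ Finset.Icc 1 (T - 1), c j * θ j k ω * Y j k ω) + μ T k ω)
    (hYrec : ∀ j ∈ Finset.Icc 1 (T - 1), ∀ k, ∀ᵐ ω ∂P,
      (P[Y j (k + 1) | 𝒢 k]) ω ≤ (1 - θ j k ω) * Y j k ω - u j k ω + μ j k ω)
    -- almost sure summability of η and of the μ's
    (hηsum : ∀ᵐ ω ∂P, Summable (fun k => η k ω))
    (hμsum : ∀ j ∈ Finset.Icc 1 T, ∀ᵐ ω ∂P, Summable (fun k => μ j k ω)) :
    ∀ᵐ ω ∂P,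
      (∃ l : ℝ, Tendsto (fun k => X k ω) atTop (nhds l)) ∧
      (∀ j ∈ Finset.Icc 1 (T - 1), ∃ l : ℝ,
        Tendsto (fun k => Y j k ω) atTop (nhds l)) ∧
      (∀ j ∈ Finset.Icc 1 T, Summable (fun k => u j k ω)) ∧
      Summable (fun k => ∑ j ∈ Finset.Icc 1 (T - 1), c j * θ j k ω * Y j k ω) :=
  stmt_0_general P 𝒢 T hT c hc X η u μ Y θ hX0 hη0 hu0 hμ0 hY0 hθ0 hXi hui hμi hYi hθYi hXa hηa hua
    hμa hYa hθa hXrec hYrec hηsum hμsum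
end

section
/- Let (w_k)_{k≥1} be a sequence of nonnegative real numbers, let C₁ > 0, C₂ ≥ 0, C₃ > 0, let b ∈ (0,1] and a ≥ b, and set c := a − b and β_k := C₃·k^{−b}. Assume C₃ > c/C₁ and C₁·C₃ ≤ 1, and that w_{k+1} ≤ (1 − C₁·β_k)·w_k + C₂·k^{−a} for every integer k ≥ 1. Then w_k ≤ C·k^{−c} for every integer k ≥ 1, where C := w₁ + C₂/(C₁·C₃ − c). -/
/-!
Induction on `k` with the ansatz `w k ≤ C k^{-c}`. Using the recursion and `k^{-b} k^{-c} = k^{-a}`,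
the choice of `C` (which makes `C₂ ≤ (C₁C₃ - c) C`) gives
`w (k+1) ≤ C (k^{-c} - c k^{-c-b}) ≤ C (k^{-c} - c k^{-c-1})`, since `b ≤ 1`.
Bernoulli's inequality `(1 + 1/k)^{-c} ≥ 1 - c/k` bounds the right-hand side by `C (k+1)^{-c}`.
-/

open Real

lemma one_sub_mul_le_one_add_rpow_neg {c x : ℝ} (hc : 0 ≤ c) (hx : -1 < x) :
    1 - c * x ≤ (1 + x) ^ (-c) :=
  calc 1 - c * x ≤ exp (x * -c) := by linarith [add_one_le_exp (x * -c)]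
    _ = exp x ^ (-c) := exp_mul x (-c)
    _ ≤ (1 + x) ^ (-c) :=
      rpow_le_rpow_of_nonpos (by linarith) (by linarith [add_one_le_exp x]) (by linarith)

lemma rpow_neg_sub_mul_rpow_neg_sub_one_le {c x : ℝ} (hc : 0 ≤ c) (hx : 0 < x) :
    x ^ (-c) - c * x ^ (-c - 1) ≤ (x + 1) ^ (-c) :=
  calc x ^ (-c) - c * x ^ (-c - 1) = x ^ (-c) * (1 - c * x⁻¹) := by
        rw [rpow_sub_one hx.ne']; ring
    _ ≤ x ^ (-c) * (1 + x⁻¹) ^ (-c) := by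
        gcongr
        exact one_sub_mul_le_one_add_rpow_neg hc (by linarith [inv_pos.mpr hx])
    _ = (x + 1) ^ (-c) := by
        rw [← mul_rpow hx.le (by positivity)]
        congr 1
        field_simp

lemma rpow_neg_sub_mul_rpow_neg_le {b c x : ℝ} (hb : b ≤ 1) (hc : 0 ≤ c) (hx : 1 ≤ x) :
    x ^ (-c) - c * x ^ (-(b + c)) ≤ (x + 1) ^ (-c) := by
  have hexp : x ^ (-c - 1) ≤ x ^ (-(b + c)) := rpow_le_rpow_of_exponent_le hx (by linarith)
  linarith [mul_le_mul_of_nonneg_left hexp hc,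
    rpow_neg_sub_mul_rpow_neg_sub_one_le hc (zero_lt_one.trans_le hx)]

theorem le_mul_rpow_neg_of_le_one_sub_mul_rpow_neg (w : ℕ → ℝ) {P Q b c C : ℝ}
    (hP₀ : 0 ≤ P) (hP₁ : P ≤ 1) (hb₀ : 0 ≤ b) (hb₁ : b ≤ 1) (hc : 0 ≤ c) (hC : 0 ≤ C)
    (hQ : Q ≤ (P - c) * C) (hw₁ : w 1 ≤ C)
    (hrec : ∀ k : ℕ, 1 ≤ k →
      w (k + 1) ≤ (1 - P * (k : ℝ) ^ (-b)) * w k + Q * (k : ℝ) ^ (-(b + c))) :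
    ∀ k : ℕ, 1 ≤ k → w k ≤ C * (k : ℝ) ^ (-c) := by
  intro k hk
  induction k, hk using Nat.le_induction with
  | base => simpa using hw₁
  | succ k hk ih =>
    have hk₁ : (1 : ℝ) ≤ k := by exact_mod_cast hk
    have hk₀ : (0 : ℝ) < k := zero_lt_one.trans_le hk₁
    have hsplit : (k : ℝ) ^ (-(b + c)) = (k : ℝ) ^ (-b) * (k : ℝ) ^ (-c) := by
      rw [neg_add, rpow_add hk₀]
    have hcoef : 0 ≤ 1 - P * (k : ℝ) ^ (-b) := by
      linarith [mul_le_of_le_one_right hP₀ (rpow_le_one_of_one_le_of_nonpos hk₁ (neg_nonpos.mpr hb₀))]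
    have hdamp : c * C * (k : ℝ) ^ (-(b + c)) ≤ (P * C - Q) * (k : ℝ) ^ (-(b + c)) := by
      gcongr
      linarith
    push_cast
    calc w (k + 1) ≤ (1 - P * (k : ℝ) ^ (-b)) * (C * (k : ℝ) ^ (-c)) + Q * (k : ℝ) ^ (-(b + c)) :=
          (hrec k hk).trans (by gcongr)
      _ = C * (k : ℝ) ^ (-c) - (P * C - Q) * (k : ℝ) ^ (-(b + c)) := by rw [hsplit]; ring
      _ ≤ C * ((k : ℝ) ^ (-c) - c * (k : ℝ) ^ (-(b + c))) := by linarith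
      _ ≤ C * ((k : ℝ) + 1) ^ (-c) := by gcongr; exact rpow_neg_sub_mul_rpow_neg_le hb₁ hc hk₁

theorem stmt_1_general (w : ℕ → ℝ) (C₁ C₂ C₃ a b : ℝ)
    (hw : ∀ k : ℕ, 1 ≤ k → 0 ≤ w k)
    (hC₁ : 0 < C₁) (hC₂ : 0 ≤ C₂)
    (hb : 0 < b ∧ b ≤ 1) (hab : b ≤ a)
    (hC₃c : (a - b) / C₁ < C₃) (hC₁C₃ : C₁ * C₃ ≤ 1)
    (hrec : ∀ k : ℕ, 1 ≤ k →
      w (k + 1) ≤ (1 - C₁ * (C₃ * (k : ℝ) ^ (-b))) * w k + C₂ * (k : ℝ) ^ (-a)) :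
    ∀ k : ℕ, 1 ≤ k →
      w k ≤ (w 1 + C₂ / (C₁ * C₃ - (a - b))) * (k : ℝ) ^ (-(a - b)) := by
  have hc : 0 ≤ a - b := sub_nonneg.mpr hab
  have hgap : 0 < C₁ * C₃ - (a - b) := by
    linarith [(div_lt_iff₀' hC₁).mp hC₃c]
  have hw₁ := hw 1 le_rfl
  have hshift : 0 ≤ C₂ / (C₁ * C₃ - (a - b)) := div_nonneg hC₂ hgap.le
  refine le_mul_rpow_neg_of_le_one_sub_mul_rpow_neg w (Q := C₂) (by linarith) hC₁C₃ hb.1.le hb.2 hc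
    (by linarith) ?_ (by linarith) ?_
  · rw [mul_add, mul_div_cancel₀ _ hgap.ne']
    exact le_add_of_nonneg_left (mul_nonneg hgap.le hw₁)
  · intro k hk
    simpa only [mul_assoc, add_sub_cancel] using hrec k hk

theorem stmt_1 (w : ℕ → ℝ) (C₁ C₂ C₃ a b : ℝ)
    (hw : ∀ k : ℕ, 1 ≤ k → 0 ≤ w k)
    (hC₁ : 0 < C₁) (hC₂ : 0 ≤ C₂) (hC₃ : 0 < C₃)
    (hb : 0 < b ∧ b ≤ 1) (hab : b ≤ a)
    (hC₃c : (a - b) / C₁ < C₃) (hC₁C₃ : C₁ * C₃ ≤ 1)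
    (hrec : ∀ k : ℕ, 1 ≤ k →
      w (k + 1) ≤ (1 - C₁ * (C₃ * (k : ℝ) ^ (-b))) * w k + C₂ * (k : ℝ) ^ (-a)) :
    ∀ k : ℕ, 1 ≤ k →
      w k ≤ (w 1 + C₂ / (C₁ * C₃ - (a - b))) * (k : ℝ) ^ (-(a - b)) :=
  stmt_1_general w C₁ C₂ C₃ a b hw hC₁ hC₂ hb hab hC₃c hC₁C₃ hrec
end

section
/- Let (w_k)_{k≥1} be a sequence of nonnegative real numbers, let 0 < b < 1, let b' satisfy b ≤ b' < b + 1/2, and let C₁, C₂ ≥ 0. Assume w_{k+1} ≤ (1 − k^{−b})·w_k + C₁·k^{−(2b'−b)} + C₂·k^{−2b} for every integer k ≥ 1. Then there exists a constant C ≥ 0 such that w_k ≤ C·(k^{−2(b'−b)} + k^{−b}) for every integer k ≥ 1. -/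
/-!
With `α = 2(b' - b) ∈ [0, 1)`, the sequence `v k = C (k^{-α} + k^{-b})` is a supersolution of the
recursion once `C` is large: by convexity of `t ↦ t^{-c}`, passing from `k` to `k + 1` lowers
`k^{-c}` by at most `c k^{-c-1} ≤ c k^{-(c+b)}`, while the contraction factor `1 - k^{-b}` removes
`C k^{-(α+b)} + C k^{-2b}`. The surplus `(1 - α) C k^{-(α+b)} + (1 - b) C k^{-2b}` absorbs the forcing
terms, and a comparison argument gives `w k ≤ v k`.
-/

open Real

theorem le_of_le_mul_add_of_mul_add_le {u v a r : ℕ → ℝ} {n : ℕ}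
    (ha : ∀ k, n ≤ k → 0 ≤ a k) (hu : ∀ k, n ≤ k → u (k + 1) ≤ a k * u k + r k)
    (hv : ∀ k, n ≤ k → a k * v k + r k ≤ v (k + 1)) (hn : u n ≤ v n) :
    ∀ k, n ≤ k → u k ≤ v k := by
  intro k hk
  induction k, hk using Nat.le_induction with
  | base => exact hn
  | succ k hk ih =>
    calc u (k + 1) ≤ a k * u k + r k := hu k hk
      _ ≤ a k * v k + r k := by gcongr; exact ha k hk
      _ ≤ v (k + 1) := hv k hk

theorem rpow_neg_le_rpow_neg_add_one_add {c x : ℝ} (hc : 0 ≤ c) (hx : 0 < x) :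
    x ^ (-c) ≤ (x + 1) ^ (-c) + c * x ^ (-c - 1) := by
  have hs : 0 < 1 + 1 / x := by positivity
  have tangent : 1 - c / x ≤ (1 + 1 / x) ^ (-c) := by
    rw [rpow_def_of_pos hs]
    have hlog : log (1 + 1 / x) ≤ 1 / x := by linarith [log_le_sub_one_of_pos hs]
    calc 1 - c / x ≤ log (1 + 1 / x) * -c + 1 := by
          rw [div_eq_mul_one_div]; nlinarith
      _ ≤ exp (log (1 + 1 / x) * -c) := add_one_le_exp _
  have hsplit : (x + 1) ^ (-c) = x ^ (-c) * (1 + 1 / x) ^ (-c) := by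
    rw [← mul_rpow hx.le hs.le]
    congr 1
    field_simp
  have hpow : x ^ (-c - 1) = x ^ (-c) / x := by
    rw [rpow_sub hx, rpow_one]
  calc x ^ (-c) = x ^ (-c) * (1 - c / x) + c * (x ^ (-c) / x) := by ring
    _ ≤ (x + 1) ^ (-c) + c * x ^ (-c - 1) := by
      rw [hsplit, hpow]
      gcongr

theorem rpow_neg_le_rpow_neg_add_one_add_mul {b c x : ℝ} (hc : 0 ≤ c) (hb : b ≤ 1) (hx : 1 ≤ x) :
    x ^ (-c) ≤ (x + 1) ^ (-c) + c * x ^ (-(c + b)) := by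
  have hexp : x ^ (-c - 1) ≤ x ^ (-(c + b)) := rpow_le_rpow_of_exponent_le hx (by linarith)
  calc x ^ (-c) ≤ (x + 1) ^ (-c) + c * x ^ (-c - 1) :=
        rpow_neg_le_rpow_neg_add_one_add hc (by linarith)
    _ ≤ (x + 1) ^ (-c) + c * x ^ (-(c + b)) := by gcongr

theorem one_sub_rpow_neg_mul_add_le {α b C C₁ C₂ x : ℝ} (hα : 0 ≤ α) (hb : 0 ≤ b) (hb1 : b ≤ 1)
    (hC : 0 ≤ C) (hC₁ : C₁ ≤ C * (1 - α)) (hC₂ : C₂ ≤ C * (1 - b)) (hx : 1 ≤ x) :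
    (1 - x ^ (-b)) * (C * (x ^ (-α) + x ^ (-b))) + (C₁ * x ^ (-(α + b)) + C₂ * x ^ (-(2 * b)))
      ≤ C * ((x + 1) ^ (-α) + (x + 1) ^ (-b)) := by
  have hx0 : 0 < x := by linarith
  have hαb : x ^ (-b) * x ^ (-α) = x ^ (-(α + b)) := by rw [← rpow_add hx0]; ring_nf
  have hbb : x ^ (-b) * x ^ (-b) = x ^ (-(b + b)) := by rw [← rpow_add hx0]; ring_nf
  have hdα := rpow_neg_le_rpow_neg_add_one_add_mul hα hb1 hx
  have hdb := rpow_neg_le_rpow_neg_add_one_add_mul hb hb1 hx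
  have h2b : 2 * b = b + b := by ring
  rw [h2b]
  calc _ = C * x ^ (-α) + C * x ^ (-b) - (C - C₁) * x ^ (-(α + b))
        - (C - C₂) * x ^ (-(b + b)) := by rw [← hαb, ← hbb]; ring
    _ ≤ C * ((x + 1) ^ (-α) + α * x ^ (-(α + b))) + C * ((x + 1) ^ (-b) + b * x ^ (-(b + b)))
          - C * α * x ^ (-(α + b)) - C * b * x ^ (-(b + b)) := by
      gcongr <;> linarith
    _ = C * ((x + 1) ^ (-α) + (x + 1) ^ (-b)) := by ring

theorem stmt_2_general (w : ℕ → ℝ) (b b' C₁ C₂ : ℝ)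
    (hb : 0 < b) (hb1 : b < 1) (hbb' : b ≤ b') (hb' : b' < b + 1 / 2)
    (hrec : ∀ k : ℕ, 1 ≤ k →
      w (k + 1) ≤ (1 - (k : ℝ) ^ (-b)) * w k
        + C₁ * (k : ℝ) ^ (-(2 * b' - b)) + C₂ * (k : ℝ) ^ (-(2 * b))) :
    ∃ C : ℝ, 0 ≤ C ∧ ∀ k : ℕ, 1 ≤ k →
      w k ≤ C * ((k : ℝ) ^ (-(2 * (b' - b))) + (k : ℝ) ^ (-b)) := by
  set α := 2 * (b' - b)
  have hα : 0 ≤ α := by linarith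
  have hα1 : 0 < 1 - α := by linarith
  set C := max (max (w 1 / 2) (C₁ / (1 - α))) (max (C₂ / (1 - b)) 0)
  have hC : 0 ≤ C := le_sup_of_le_right le_sup_right
  have hC₁ : C₁ ≤ C * (1 - α) := (div_le_iff₀ hα1).1 (le_sup_of_le_left le_sup_right)
  have hC₂ : C₂ ≤ C * (1 - b) := (div_le_iff₀ (by linarith)).1 (le_sup_of_le_right le_sup_left)
  have hexp : -(2 * b' - b) = -(α + b) := by ring
  refine ⟨C, hC, le_of_le_mul_add_of_mul_add_le (n := 1) (a := fun k => 1 - (k : ℝ) ^ (-b))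
    (r := fun k => C₁ * (k : ℝ) ^ (-(α + b)) + C₂ * (k : ℝ) ^ (-(2 * b)))
    (fun k hk => ?_) (fun k hk => ?_) (fun k hk => ?_) ?_⟩
  · exact sub_nonneg.2 (rpow_le_one_of_one_le_of_nonpos (by exact_mod_cast hk) (by linarith))
  · simpa only [add_assoc, hexp] using hrec k hk
  · push_cast
    exact one_sub_rpow_neg_mul_add_le hα hb.le hb1.le hC hC₁ hC₂ (by exact_mod_cast hk)
  · have hw₁ : w 1 / 2 ≤ C := le_sup_of_le_left le_sup_left
    simp only [Nat.cast_one, one_rpow]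
    linarith

theorem stmt_2 (w : ℕ → ℝ) (b b' C₁ C₂ : ℝ)
    (hw : ∀ k : ℕ, 1 ≤ k → 0 ≤ w k)
    (hb : 0 < b) (hb1 : b < 1) (hbb' : b ≤ b') (hb' : b' < b + 1 / 2)
    (hC₁ : 0 ≤ C₁) (hC₂ : 0 ≤ C₂)
    (hrec : ∀ k : ℕ, 1 ≤ k →
      w (k + 1) ≤ (1 - (k : ℝ) ^ (-b)) * w k
        + C₁ * (k : ℝ) ^ (-(2 * b' - b)) + C₂ * (k : ℝ) ^ (-(2 * b))) :
    ∃ C : ℝ, 0 ≤ C ∧ ∀ k : ℕ, 1 ≤ k →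
      w k ≤ C * ((k : ℝ) ^ (-(2 * (b' - b))) + (k : ℝ) ^ (-b)) :=
  stmt_2_general w b b' C₁ C₂ hb hb1 hbb' hb' hrec
end

section
/- Let h : E₁ → E₂ be L-Lipschitz (L ≥ 0), let γ ∈ (0,1] and V ≥ 0. Let x and z be square-integrable random vectors with values in E₁ and E₂ respectively, both 𝒢-measurable; let x' be a square-integrable ℋ-measurable random vector with values in E₁ such that h∘x and h∘x' are square-integrable; and let ξ be a square-integrable random vector with values in E₂ such that, almost surely, E[ξ | ℋ] = h(x') and E[‖ξ − h(x')‖² | ℋ] ≤ V. Set z⁺ := (1−γ)·z + γ·ξ. Then, almost surely, E[‖z⁺ − h(x')‖² | 𝒢] ≤ (1−γ)·‖z − h(x)‖² + (L²/γ)·E[‖x' − x‖² | 𝒢] + 2V·γ². -/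
/-!
Write `z⁺ - h(x') = (1 - γ)(z - h(x')) + γ(ξ - h(x'))`. Given `ℋ`, the first summand is known and
the second is centred, so the cross term vanishes and
`E[‖z⁺ - h(x')‖² | ℋ] ≤ (1 - γ)²‖z - h(x')‖² + γ²V`.
The triangle inequality through `h(x)` and Young's inequality with weights `1 - γ` and `γ` give
`(1 - γ)²‖z - h(x')‖² ≤ (1 - γ)‖z - h(x)‖² + (L²/γ)‖x' - x‖²`; conditioning on `𝒢` (tower
property) and pulling out the `𝒢`-measurable term `‖z - h(x)‖²` finishes the proof.
-/

open MeasureTheory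
open scoped RealInnerProductSpace

theorem one_sub_sq_mul_sq_le_of_le_add {γ r a b : ℝ} (hγ0 : 0 < γ) (hγ1 : γ ≤ 1)
    (hr : 0 ≤ r) (hrab : r ≤ a + b) :
    (1 - γ) ^ 2 * r ^ 2 ≤ (1 - γ) * a ^ 2 + b ^ 2 / γ := by
  have hr2 : r ^ 2 ≤ (a + b) ^ 2 := pow_le_pow_left₀ hr hrab 2
  rw [← sub_le_iff_le_add', le_div_iff₀ hγ0]
  -- `γ ((1-γ) a² + b²/γ - (1-γ)² (a+b)²) = (1-γ) (γ a - (1-γ) b)² + γ (2-γ) b²`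
  nlinarith [mul_nonneg (sub_nonneg.2 hγ1) (sq_nonneg (γ * a - (1 - γ) * b)),
    mul_nonneg (mul_nonneg hγ0.le (by linarith : (0 : ℝ) ≤ 2 - γ)) (sq_nonneg b),
    mul_le_mul_of_nonneg_left hr2 (mul_nonneg hγ0.le (sq_nonneg (1 - γ)))]

theorem one_sub_sq_mul_norm_sub_sq_le {E F : Type*} [SeminormedAddCommGroup E]
    [SeminormedAddCommGroup F] {h : E → F} {L γ : ℝ}
    (hLip : ∀ a b : E, ‖h a - h b‖ ≤ L * ‖a - b‖) (hγ0 : 0 < γ) (hγ1 : γ ≤ 1) (u : F) (a a' : E) :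
    (1 - γ) ^ 2 * ‖u - h a'‖ ^ 2 ≤ (1 - γ) * ‖u - h a‖ ^ 2 + L ^ 2 / γ * ‖a' - a‖ ^ 2 := by
  have htri : ‖u - h a'‖ ≤ ‖u - h a‖ + L * ‖a' - a‖ :=
    calc ‖u - h a'‖ ≤ ‖u - h a‖ + ‖h a - h a'‖ := norm_sub_le_norm_sub_add_norm_sub _ _ _
      _ ≤ ‖u - h a‖ + L * ‖a' - a‖ := by
        rw [norm_sub_rev a']; exact add_le_add le_rfl (hLip a a')
  have hyoung := one_sub_sq_mul_sq_le_of_le_add hγ0 hγ1 (norm_nonneg _) htri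
  rwa [mul_pow, mul_div_right_comm] at hyoung

namespace MeasureTheory

variable {Ω : Type*} {m m0 : MeasurableSpace Ω} {μ : Measure Ω}

theorem MemLp.integrable_inner {E : Type*} [NormedAddCommGroup E] [InnerProductSpace ℝ E]
    {u v : Ω → E} (hu : MemLp u 2 μ) (hv : MemLp v 2 μ) :
    Integrable (fun ω => ⟪u ω, v ω⟫) μ :=
  memLp_one_iff_integrable.1 ((innerSL ℝ).memLp_of_bilin 1 hu hv)

theorem condExp_sub_eq_zero_of_condExp_eq {F : Type*} [NormedAddCommGroup F] [NormedSpace ℝ F]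
    [CompleteSpace F] [IsFiniteMeasure μ] (hm : m ≤ m0) {f g : Ω → F}
    (hf : Integrable f μ) (hg : StronglyMeasurable[m] g) (hg_int : Integrable g μ)
    (hfg : μ[f|m] =ᵐ[μ] g) :
    μ[f - g|m] =ᵐ[μ] 0 := by
  filter_upwards [condExp_sub hf hg_int m, hfg] with ω h₁ h₂
  rw [h₁, Pi.sub_apply, h₂, condExp_of_stronglyMeasurable hm hg hg_int, sub_self, Pi.zero_apply]

theorem condExp_inner_eq_zero_of_condExp_eq_zero {E : Type*} [NormedAddCommGroup E]
    [InnerProductSpace ℝ E] [CompleteSpace E] {u e : Ω → E}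
    (hu : StronglyMeasurable[m] u) (hue : Integrable (fun ω => ⟪u ω, e ω⟫) μ)
    (he : Integrable e μ) (he0 : μ[e|m] =ᵐ[μ] 0) :
    μ[fun ω => ⟪u ω, e ω⟫|m] =ᵐ[μ] 0 := by
  filter_upwards [condExp_bilin_of_stronglyMeasurable_left (innerSL ℝ) hu hue he, he0]
    with ω hω hω0
  refine hω.trans ?_
  simp [hω0]

theorem condExp_norm_sq_smul_add_smul {E : Type*} [NormedAddCommGroup E] [InnerProductSpace ℝ E]
    [CompleteSpace E] [IsFiniteMeasure μ] (hm : m ≤ m0)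
    {w e : Ω → E} (hw : StronglyMeasurable[m] w) (hw2 : MemLp w 2 μ) (he2 : MemLp e 2 μ)
    (he0 : μ[e|m] =ᵐ[μ] 0) (a b : ℝ) :
    μ[fun ω => ‖a • w ω + b • e ω‖ ^ 2|m] =ᵐ[μ]
      fun ω => a ^ 2 * ‖w ω‖ ^ 2 + b ^ 2 * μ[fun ω => ‖e ω‖ ^ 2|m] ω := by
  have hw_int : Integrable (fun ω => ‖w ω‖ ^ 2) μ := hw2.norm.integrable_sq
  have he_int : Integrable (fun ω => ‖e ω‖ ^ 2) μ := he2.norm.integrable_sq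
  have hwe_int : Integrable (fun ω => ⟪w ω, e ω⟫) μ := hw2.integrable_inner he2
  have hexpand : (fun ω => ‖a • w ω + b • e ω‖ ^ 2) =
      (a ^ 2 • fun ω => ‖w ω‖ ^ 2) + ((2 * a * b) • (fun ω => ⟪w ω, e ω⟫)
        + b ^ 2 • fun ω => ‖e ω‖ ^ 2) := by
    funext ω
    simp only [Pi.add_apply, Pi.smul_apply, smul_eq_mul, norm_add_sq_real, norm_smul,
      real_inner_smul_left, real_inner_smul_right, mul_pow, Real.norm_eq_abs, sq_abs]
    ring
  have hw_cond : μ[fun ω => ‖w ω‖ ^ 2|m] = fun ω => ‖w ω‖ ^ 2 :=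
    condExp_of_stronglyMeasurable hm (hw.norm.pow 2) hw_int
  rw [hexpand]
  filter_upwards [condExp_add (hw_int.smul (a ^ 2))
      ((hwe_int.smul (2 * a * b)).add (he_int.smul (b ^ 2))) m,
    condExp_add (hwe_int.smul (2 * a * b)) (he_int.smul (b ^ 2)) m,
    condExp_smul (a ^ 2) (fun ω => ‖w ω‖ ^ 2) m,
    condExp_smul (2 * a * b) (fun ω => ⟪w ω, e ω⟫) m,
    condExp_smul (b ^ 2) (fun ω => ‖e ω‖ ^ 2) m,
    condExp_inner_eq_zero_of_condExp_eq_zero hw hwe_int (he2.integrable one_le_two) he0]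
    with ω h₁ h₂ h₃ h₄ h₅ h₀
  simp only [h₁, Pi.add_apply, h₂, h₃, h₄, h₅, Pi.smul_apply, smul_eq_mul, hw_cond, h₀,
    Pi.zero_apply]
  ring

theorem condExp_le_condExp_of_condExp_le [IsFiniteMeasure μ] {m' : MeasurableSpace Ω}
    (hmm' : m ≤ m') (hm' : m' ≤ m0) {f g : Ω → ℝ} (hfg : μ[f|m'] ≤ᵐ[μ] g)
    (hg : Integrable g μ) :
    μ[f|m] ≤ᵐ[μ] μ[g|m] :=
  (condExp_condExp_of_le hmm' hm').symm.trans_le (condExp_mono integrable_condExp hg hfg)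

theorem condExp_add_mul_of_stronglyMeasurable [IsFiniteMeasure μ] (hm : m ≤ m0)
    {a f : Ω → ℝ} (ha : StronglyMeasurable[m] a) (ha_int : Integrable a μ)
    (hf : Integrable f μ) (c : ℝ) :
    μ[fun ω => a ω + c * f ω|m] =ᵐ[μ] fun ω => a ω + c * μ[f|m] ω := by
  have hsum : μ[fun ω => a ω + c * f ω|m] =ᵐ[μ] μ[a|m] + μ[c • f|m] :=
    condExp_add ha_int (hf.smul c) m
  filter_upwards [hsum, condExp_smul c f m] with ω h₁ h₂
  rw [h₁, Pi.add_apply, h₂, condExp_of_stronglyMeasurable hm ha ha_int, Pi.smul_apply,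
    smul_eq_mul]

end MeasureTheory

theorem stmt_4_general {Ω : Type*} {m0 : MeasurableSpace Ω} (P : Measure Ω) [IsProbabilityMeasure P]
    {𝒢 ℋ : MeasurableSpace Ω} (h𝒢ℋ : 𝒢 ≤ ℋ) (hℋ : ℋ ≤ m0)
    {E₁ E₂ : Type*}
    [NormedAddCommGroup E₁]
    [NormedAddCommGroup E₂] [InnerProductSpace ℝ E₂] [FiniteDimensional ℝ E₂]
    (h : E₁ → E₂) (L : ℝ) (hL : 0 ≤ L)
    (hLip : ∀ a b : E₁, ‖h a - h b‖ ≤ L * ‖a - b‖)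
    (γ V : ℝ) (hγ : 0 < γ ∧ γ ≤ 1) (hV : 0 ≤ V)
    (x : Ω → E₁) (z : Ω → E₂) (x' : Ω → E₁) (ξ : Ω → E₂)
    (hx2 : MemLp x 2 P) (hz2 : MemLp z 2 P) (hx'2 : MemLp x' 2 P) (hξ2 : MemLp ξ 2 P)
    (hxG : StronglyMeasurable[𝒢] x) (hzG : StronglyMeasurable[𝒢] z)
    (hx'H : StronglyMeasurable[ℋ] x')
    (hhx : MemLp (fun ω => h (x ω)) 2 P) (hhx' : MemLp (fun ω => h (x' ω)) 2 P)
    (hξmean : P[ξ | ℋ] =ᵐ[P] fun ω => h (x' ω))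
    (hξvar : ∀ᵐ ω ∂P, (P[fun ω' => ‖ξ ω' - h (x' ω')‖ ^ 2 | ℋ]) ω ≤ V) :
    ∀ᵐ ω ∂P,
      (P[fun ω' => ‖((1 - γ) • z ω' + γ • ξ ω') - h (x' ω')‖ ^ 2 | 𝒢]) ω ≤
        (1 - γ) * ‖z ω - h (x ω)‖ ^ 2
          + (L ^ 2 / γ) * (P[fun ω' => ‖x' ω' - x ω'‖ ^ 2 | 𝒢]) ω
          + 2 * V * γ ^ 2 := by
  obtain ⟨hγ0, hγ1⟩ := hγ
  have hh : Continuous h := (LipschitzWith.of_dist_le_mul (K := ⟨L, hL⟩) fun a b => by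
    rw [dist_eq_norm, dist_eq_norm]; exact hLip a b).continuous
  have hhx'H : StronglyMeasurable[ℋ] fun ω => h (x' ω) := hh.comp_stronglyMeasurable hx'H
  have hnoise : P[fun ω => ξ ω - h (x' ω)|ℋ] =ᵐ[P] 0 := condExp_sub_eq_zero_of_condExp_eq hℋ
    (hξ2.integrable one_le_two) hhx'H (hhx'.integrable one_le_two) hξmean
  have hdecomp := condExp_norm_sq_smul_add_smul (w := fun ω => z ω - h (x' ω))
    (e := fun ω => ξ ω - h (x' ω)) hℋ ((hzG.mono h𝒢ℋ).sub hhx'H) (hz2.sub hhx')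
    (hξ2.sub hhx') hnoise (1 - γ) γ
  have hℋbound : P[fun ω => ‖((1 - γ) • z ω + γ • ξ ω) - h (x' ω)‖ ^ 2|ℋ] ≤ᵐ[P]
      fun ω => ((1 - γ) * ‖z ω - h (x ω)‖ ^ 2 + 2 * V * γ ^ 2)
        + L ^ 2 / γ * ‖x' ω - x ω‖ ^ 2 := by
    have hsplit : ∀ ω, ((1 - γ) • z ω + γ • ξ ω) - h (x' ω) =
        (1 - γ) • (z ω - h (x' ω)) + γ • (ξ ω - h (x' ω)) := fun ω => by module
    simp_rw [hsplit]
    filter_upwards [hdecomp, hξvar] with ω h₁ h₂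
    rw [h₁]
    linarith [one_sub_sq_mul_norm_sub_sq_le hLip hγ0 hγ1 (z ω) (x ω) (x' ω),
      mul_le_mul_of_nonneg_left h₂ (sq_nonneg γ), mul_nonneg hV (sq_nonneg γ)]
  have hdrift𝒢 : StronglyMeasurable[𝒢] fun ω => (1 - γ) * ‖z ω - h (x ω)‖ ^ 2 + 2 * V * γ ^ 2 :=
    (((hzG.sub (hh.comp_stronglyMeasurable hxG)).norm.pow 2).const_mul _).add_const _
  have hdrift_int : Integrable (fun ω => (1 - γ) * ‖z ω - h (x ω)‖ ^ 2 + 2 * V * γ ^ 2) P :=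
    ((hz2.sub hhx).norm.integrable_sq.const_mul _).add (integrable_const _)
  have hmove_int : Integrable (fun ω => ‖x' ω - x ω‖ ^ 2) P := (hx'2.sub hx2).norm.integrable_sq
  filter_upwards [condExp_le_condExp_of_condExp_le h𝒢ℋ hℋ hℋbound
      (hdrift_int.add (hmove_int.const_mul (L ^ 2 / γ))),
    condExp_add_mul_of_stronglyMeasurable (h𝒢ℋ.trans hℋ) hdrift𝒢 hdrift_int hmove_int (L ^ 2 / γ)]
    with ω h₁ h₂
  linarith

theorem stmt_4 {Ω : Type*} {m0 : MeasurableSpace Ω} (P : Measure Ω) [IsProbabilityMeasure P]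
    {𝒢 ℋ : MeasurableSpace Ω} (h𝒢ℋ : 𝒢 ≤ ℋ) (hℋ : ℋ ≤ m0)
    {E₁ E₂ : Type*}
    [NormedAddCommGroup E₁] [InnerProductSpace ℝ E₁] [FiniteDimensional ℝ E₁]
    [NormedAddCommGroup E₂] [InnerProductSpace ℝ E₂] [FiniteDimensional ℝ E₂]
    (h : E₁ → E₂) (L : ℝ) (hL : 0 ≤ L)
    (hLip : ∀ a b : E₁, ‖h a - h b‖ ≤ L * ‖a - b‖)
    (γ V : ℝ) (hγ : 0 < γ ∧ γ ≤ 1) (hV : 0 ≤ V)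
    (x : Ω → E₁) (z : Ω → E₂) (x' : Ω → E₁) (ξ : Ω → E₂)
    (hx2 : MemLp x 2 P) (hz2 : MemLp z 2 P) (hx'2 : MemLp x' 2 P) (hξ2 : MemLp ξ 2 P)
    (hxG : StronglyMeasurable[𝒢] x) (hzG : StronglyMeasurable[𝒢] z)
    (hx'H : StronglyMeasurable[ℋ] x')
    (hhx : MemLp (fun ω => h (x ω)) 2 P) (hhx' : MemLp (fun ω => h (x' ω)) 2 P)
    (hξmean : P[ξ | ℋ] =ᵐ[P] fun ω => h (x' ω))
    (hξvar : ∀ᵐ ω ∂P, (P[fun ω' => ‖ξ ω' - h (x' ω')‖ ^ 2 | ℋ]) ω ≤ V) :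
    ∀ᵐ ω ∂P,
      (P[fun ω' => ‖((1 - γ) • z ω' + γ • ξ ω') - h (x' ω')‖ ^ 2 | 𝒢]) ω ≤
        (1 - γ) * ‖z ω - h (x ω)‖ ^ 2
          + (L ^ 2 / γ) * (P[fun ω' => ‖x' ω' - x ω'‖ ^ 2 | 𝒢]) ω
          + 2 * V * γ ^ 2 :=
  stmt_4_general P h𝒢ℋ hℋ h L hL hLip γ V hγ hV x z x' ξ hx2 hz2 hx'2 hξ2 hxG hzG hx'H hhx hhx'
    hξmean hξvar
end

section
/- Let D, V ≥ 0 and γ ∈ [0,1]. Let a be a 𝒢-measurable random vector in E with E[‖a‖⁴] < ∞ and E[‖a‖²] ≤ D, and let b be a random vector in E with E[‖b‖⁴] < ∞ such that, almost surely, E[b | 𝒢] = 0, E[‖b‖² | 𝒢] ≤ V, and E[‖b‖⁴ | 𝒢] ≤ V². Then E[‖(1−γ)·a + γ·b‖⁴] ≤ (1−γ)⁴·E[‖a‖⁴] + 6·(1−γ)²·γ²·D·V + 4·(1−γ)·γ³·√D·V^{3/2} + γ⁴·V². -/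
open MeasureTheory

section Aux

lemma aux_sq_le' (x : ℝ) : x ≤ 1 + x^2 := by nlinarith [sq_nonneg (x-1)]

lemma aux_cube_mul (u v : ℝ) (hu : 0 ≤ u) (hv : 0 ≤ v) : u^3*v ≤ u^4 + v^4 := by
  rcases le_total u v with h | h
  · have : u^3*v ≤ v^3*v := mul_le_mul_of_nonneg_right (pow_le_pow_left₀ hu h 3) hv
    nlinarith [pow_nonneg hu 4]
  · have : u^3*v ≤ u^3*u := mul_le_mul_of_nonneg_left h (pow_nonneg hu 3)
    nlinarith [pow_nonneg hv 4]

lemma aux_mul_cube (u v : ℝ) (hu : 0 ≤ u) (hv : 0 ≤ v) : u*v^3 ≤ u^4 + v^4 := by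
  have := aux_cube_mul v u hv hu; nlinarith [this]

lemma aux_sq_sq (u v : ℝ) : u^2*v^2 ≤ u^4 + v^4 := by nlinarith [sq_nonneg (u^2 - v^2)]

lemma aux_add_pow4 (u v : ℝ) (hu : 0 ≤ u) (hv : 0 ≤ v) : (u+v)^4 ≤ 8*(u^4 + v^4) := by
  nlinarith [sq_nonneg (u-v), sq_nonneg (u+v), sq_nonneg (u^2-v^2), mul_nonneg hu hv,
    sq_nonneg (u*v), mul_nonneg (mul_nonneg hu hu) (mul_nonneg hv hv)]

lemma aux_poly_bound (γ s t p : ℝ) (hγ0 : 0 ≤ γ) (hγ1 : γ ≤ 1)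
    (hp : p ≤ s * t) (hp' : -(s*t) ≤ p) :
    ((1-γ)^2*s^2 + 2*((1-γ)*γ*p) + γ^2*t^2)^2 ≤
      (1-γ)^4*s^4 + 4*(1-γ)^3*γ*(s^2*p) + 6*(1-γ)^2*γ^2*(s^2*t^2)
        + 4*(1-γ)*γ^3*(s*t^3) + γ^4*t^4 := by
  have h1 : 0 ≤ 1 - γ := by linarith
  have hp2 : p^2 ≤ (s*t)^2 := by nlinarith
  nlinarith [mul_nonneg (mul_nonneg (sq_nonneg ((1-γ)*γ)) h1) hγ0,
    mul_le_mul_of_nonneg_left hp2 (by positivity : (0:ℝ) ≤ 4*(1-γ)^2*γ^2),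
    mul_le_mul_of_nonneg_left hp (by positivity : (0:ℝ) ≤ 4*(1-γ)*γ^3*t^2)]

lemma aux_amgm_pt (δ s t : ℝ) : 2*δ*(s*t^3) ≤ δ^2*(s^2*t^2) + t^4 := by
  nlinarith [sq_nonneg (δ*s*t - t^2)]

lemma aux_opt_lemma {S D V : ℝ} (hS : 0 ≤ S) (hD : 0 ≤ D) (hV : 0 ≤ V)
    (h : ∀ δ : ℝ, 0 < δ → 2*δ*S ≤ δ^2*(V*D) + V^2) :
    S ≤ Real.sqrt D * (V * Real.sqrt V) := by
  rcases eq_or_lt_of_le hV with hV0 | hVpos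
  · have h1 := h 1 one_pos
    have : S ≤ 0 := by nlinarith [h1]
    calc S ≤ 0 := this
      _ ≤ _ := by positivity
  · rcases eq_or_lt_of_le hD with hD0 | hDpos
    · have hS0 : S ≤ 0 := by
        by_contra hS'
        push_neg at hS'
        have hδ : 0 < V^2/S := by positivity
        have h2 := h (V^2/S) hδ
        rw [← hD0] at h2
        have h3 : 2*(V^2/S)*S = 2*V^2 := by field_simp
        nlinarith [h2, sq_nonneg V, h3]
      calc S ≤ 0 := hS0
        _ ≤ _ := by positivity
    · set sD := Real.sqrt D with hsD
      set sV := Real.sqrt V with hsV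
      have hsDpos : 0 < sD := Real.sqrt_pos.2 hDpos
      have hsVpos : 0 < sV := Real.sqrt_pos.2 hVpos
      have hsD2 : sD^2 = D := Real.sq_sqrt hD
      have hsV2 : sV^2 = V := Real.sq_sqrt hV
      have hδ : 0 < sV/sD := by positivity
      have key := h (sV/sD) hδ
      have hrhs : (sV/sD)^2*(V*D) + V^2 = 2*(sV/sD)*(sD*(V*sV)) := by
        field_simp
        linear_combination (D - 2*sD^2) * hsV2 - V * hsD2
      rw [hrhs] at key
      have := le_of_mul_le_mul_left (by linarith : (sV/sD)*S ≤ (sV/sD)*(sD*(V*sV))) hδ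
      linarith

lemma aux_pull_le {Ω : Type*} {𝒢 m0 : MeasurableSpace Ω} (h𝒢 : 𝒢 ≤ m0)
    (P : Measure Ω) [IsProbabilityMeasure P] {h g : Ω → ℝ} {c : ℝ}
    (hh : StronglyMeasurable[𝒢] h) (hh0 : ∀ ω, 0 ≤ h ω)
    (hhi : Integrable h P) (hgi : Integrable g P)
    (hpi : Integrable (fun ω => h ω * g ω) P)
    (hc : ∀ᵐ ω ∂P, (P[g | 𝒢]) ω ≤ c) :
    ∫ ω, h ω * g ω ∂P ≤ c * ∫ ω, h ω ∂P := by
  haveI : SigmaFinite (P.trim h𝒢) := by infer_instance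
  have hpi' : Integrable (h * g) P := hpi
  have hmul := condExp_mul_of_stronglyMeasurable_left hh hpi' hgi
  calc ∫ ω, h ω * g ω ∂P = ∫ ω, (P[h * g | 𝒢]) ω ∂P := (integral_condExp h𝒢 (f := h * g)).symm
    _ = ∫ ω, h ω * (P[g | 𝒢]) ω ∂P := integral_congr_ae hmul
    _ ≤ ∫ ω, h ω * c ∂P := by
        refine integral_mono_ae (integrable_condExp.congr hmul) (hhi.mul_const c) ?_
        filter_upwards [hc] with ω hω
        exact mul_le_mul_of_nonneg_left hω (hh0 ω)
    _ = c * ∫ ω, h ω ∂P := by rw [integral_mul_const]; ring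

lemma aux_pull_zero {Ω : Type*} {𝒢 m0 : MeasurableSpace Ω} (h𝒢 : 𝒢 ≤ m0)
    (P : Measure Ω) [IsProbabilityMeasure P] {h g : Ω → ℝ}
    (hh : StronglyMeasurable[𝒢] h)
    (hgi : Integrable g P)
    (hpi : Integrable (fun ω => h ω * g ω) P)
    (hc : (P[g | 𝒢]) =ᵐ[P] 0) :
    ∫ ω, h ω * g ω ∂P = 0 := by
  haveI : SigmaFinite (P.trim h𝒢) := by infer_instance
  have hpi' : Integrable (h * g) P := hpi
  have hmul := condExp_mul_of_stronglyMeasurable_left hh hpi' hgi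
  calc ∫ ω, h ω * g ω ∂P = ∫ ω, (P[h * g | 𝒢]) ω ∂P := (integral_condExp h𝒢 (f := h * g)).symm
    _ = ∫ ω, (0:ℝ) ∂P := by
        refine integral_congr_ae (hmul.trans ?_)
        filter_upwards [hc] with ω hω
        simp [hω]
    _ = 0 := integral_zero _ _

lemma aux_inner_condexp_zero {Ω : Type*} {𝒢 m0 : MeasurableSpace Ω} (h𝒢 : 𝒢 ≤ m0)
    (P : Measure Ω) [IsProbabilityMeasure P]
    {E : Type*} [NormedAddCommGroup E] [InnerProductSpace ℝ E] [FiniteDimensional ℝ E]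
    {b : Ω → E} (hbint : Integrable b P) (hbmean : P[b | 𝒢] =ᵐ[P] 0) (c : E) :
    (P[fun ω => (inner ℝ c (b ω) : ℝ) | 𝒢]) =ᵐ[P] 0 := by
  haveI : SigmaFinite (P.trim h𝒢) := by infer_instance
  have hgi : Integrable (fun ω => (inner ℝ c (b ω) : ℝ)) P := hbint.const_inner c
  refine (ae_eq_condExp_of_forall_setIntegral_eq h𝒢 hgi ?_ ?_ ?_).symm
  · exact fun s _ _ => (integrable_const (0:ℝ)).integrableOn
  · intro s hs hμs
    have hb_on : IntegrableOn b s P := hbint.integrableOn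
    have h1 : ∫ ω in s, (inner ℝ c (b ω) : ℝ) ∂P = (inner ℝ c (∫ ω in s, b ω ∂P) : ℝ) :=
      integral_inner hb_on c
    have h2 : ∫ ω in s, b ω ∂P = 0 := by
      rw [← setIntegral_condExp h𝒢 hbint hs]
      calc ∫ ω in s, (P[b|𝒢]) ω ∂P = ∫ ω in s, (0:E) ∂P :=
            integral_congr_ae (ae_restrict_of_ae hbmean)
        _ = 0 := by simp
    simp [h1, h2]
  · exact StronglyMeasurable.aestronglyMeasurable (stronglyMeasurable_const (β := ℝ))

end Aux

theorem stmt_6 {Ω : Type*} {𝒢 : MeasurableSpace Ω} {m0 : MeasurableSpace Ω} (P : Measure Ω) [IsProbabilityMeasure P]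
    (h𝒢 : 𝒢 ≤ m0)
    {E : Type*} [NormedAddCommGroup E] [InnerProductSpace ℝ E] [FiniteDimensional ℝ E]
    (D V γ : ℝ) (hD : 0 ≤ D) (hV : 0 ≤ V) (hγ : 0 ≤ γ ∧ γ ≤ 1)
    (a b : Ω → E)
    (haG : StronglyMeasurable[𝒢] a)
    (ha4 : Integrable (fun ω => ‖a ω‖ ^ 4) P)
    (ha2 : ∫ ω, ‖a ω‖ ^ 2 ∂P ≤ D)
    (hbm : AEStronglyMeasurable b P)
    (hb4 : Integrable (fun ω => ‖b ω‖ ^ 4) P)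
    (hbmean : P[b | 𝒢] =ᵐ[P] 0)
    (hb2 : ∀ᵐ ω ∂P, (P[fun ω' => ‖b ω'‖ ^ 2 | 𝒢]) ω ≤ V)
    (hb4c : ∀ᵐ ω ∂P, (P[fun ω' => ‖b ω'‖ ^ 4 | 𝒢]) ω ≤ V ^ 2) :
    ∫ ω, ‖(1 - γ) • a ω + γ • b ω‖ ^ 4 ∂P ≤
      (1 - γ) ^ 4 * (∫ ω, ‖a ω‖ ^ 4 ∂P) + 6 * (1 - γ) ^ 2 * γ ^ 2 * D * V
        + 4 * (1 - γ) * γ ^ 3 * Real.sqrt D * V ^ ((3 : ℝ) / 2) + γ ^ 4 * V ^ 2 := by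
  obtain ⟨hγ0, hγ1⟩ := hγ
  have h1γ : 0 ≤ 1 - γ := by linarith
  have hma : StronglyMeasurable[m0] a := haG.mono h𝒢
  have hmaae : AEStronglyMeasurable[m0] a P := hma.aestronglyMeasurable
  have hbm : AEStronglyMeasurable[m0] b P := hbm
  -- basic integrability facts
  have hdom : Integrable (fun ω => 2 + ‖a ω‖^4 + ‖b ω‖^4) P :=
    ((integrable_const 2).add ha4).add hb4
  have hbint : Integrable b P := by
    refine hdom.mono' hbm (ae_of_all _ fun ω => ?_)
    have h1 := aux_sq_le' ‖b ω‖
    have h2 := aux_sq_le' (‖b ω‖^2)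
    have h3 := norm_nonneg (a ω)
    nlinarith [pow_nonneg h3 4]
  have ha2i : Integrable (fun ω => ‖a ω‖^2) P := by
    refine hdom.mono' (hmaae.norm.pow 2) (ae_of_all _ fun ω => ?_)
    have h2 := aux_sq_le' (‖a ω‖^2)
    have := norm_nonneg (b ω)
    rw [Real.norm_eq_abs, abs_of_nonneg (by positivity)]
    nlinarith [pow_nonneg this 4]
  have hb2i : Integrable (fun ω => ‖b ω‖^2) P := by
    refine hdom.mono' (hbm.norm.pow 2) (ae_of_all _ fun ω => ?_)
    have h2 := aux_sq_le' (‖b ω‖^2)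
    have := norm_nonneg (a ω)
    rw [Real.norm_eq_abs, abs_of_nonneg (by positivity)]
    nlinarith [pow_nonneg this 4]
  have hT3i : Integrable (fun ω => ‖a ω‖^2 * ‖b ω‖^2) P := by
    refine hdom.mono' ((hmaae.norm.pow 2).mul (hbm.norm.pow 2)) (ae_of_all _ fun ω => ?_)
    rw [Real.norm_eq_abs, abs_of_nonneg (by positivity)]
    nlinarith [aux_sq_sq ‖a ω‖ ‖b ω‖]
  have hT4i : Integrable (fun ω => ‖a ω‖ * ‖b ω‖^3) P := by
    refine hdom.mono' (hmaae.norm.mul (hbm.norm.pow 3)) (ae_of_all _ fun ω => ?_)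
    rw [Real.norm_eq_abs, abs_of_nonneg (by positivity)]
    nlinarith [aux_mul_cube ‖a ω‖ ‖b ω‖ (norm_nonneg _) (norm_nonneg _)]
  have hT2i : Integrable (fun ω => ‖a ω‖^2 * (inner ℝ (a ω) (b ω) : ℝ)) P := by
    refine hdom.mono' ((hmaae.norm.pow 2).mul (hmaae.inner hbm)) (ae_of_all _ fun ω => ?_)
    rw [Real.norm_eq_abs, abs_mul, abs_of_nonneg (by positivity : (0:ℝ) ≤ ‖a ω‖^2)]
    have h1 : |(inner ℝ (a ω) (b ω) : ℝ)| ≤ ‖a ω‖ * ‖b ω‖ := abs_real_inner_le_norm _ _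
    have h2 : ‖a ω‖^2 * |(inner ℝ (a ω) (b ω) : ℝ)| ≤ ‖a ω‖^3 * ‖b ω‖ := by
      nlinarith [sq_nonneg ‖a ω‖]
    nlinarith [aux_cube_mul ‖a ω‖ ‖b ω‖ (norm_nonneg _) (norm_nonneg _)]
  -- abbreviations for the integrals
  set I1 := ∫ ω, ‖a ω‖ ^ 4 ∂P with hI1
  set T2 := ∫ ω, ‖a ω‖^2 * (inner ℝ (a ω) (b ω) : ℝ) ∂P with hT2def
  set T3 := ∫ ω, ‖a ω‖^2 * ‖b ω‖^2 ∂P with hT3def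
  set T4 := ∫ ω, ‖a ω‖ * ‖b ω‖^3 ∂P with hT4def
  set T5 := ∫ ω, ‖b ω‖^4 ∂P with hT5def
  -- Step A: pointwise expansion bound
  have stepA : ∫ ω, ‖(1 - γ) • a ω + γ • b ω‖ ^ 4 ∂P ≤
      (1-γ)^4*I1 + 4*(1-γ)^3*γ*T2 + 6*(1-γ)^2*γ^2*T3 + 4*(1-γ)*γ^3*T4 + γ^4*T5 := by
    have hGint : Integrable (fun ω => (1-γ)^4*‖a ω‖^4
        + 4*(1-γ)^3*γ*(‖a ω‖^2 * (inner ℝ (a ω) (b ω) : ℝ))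
        + 6*(1-γ)^2*γ^2*(‖a ω‖^2 * ‖b ω‖^2)
        + 4*(1-γ)*γ^3*(‖a ω‖ * ‖b ω‖^3) + γ^4*‖b ω‖^4) P :=
      ((((ha4.const_mul _).add (hT2i.const_mul _)).add (hT3i.const_mul _)).add
        (hT4i.const_mul _)).add (hb4.const_mul _)
    have hLint : Integrable (fun ω => ‖(1 - γ) • a ω + γ • b ω‖ ^ 4) P := by
      refine ((ha4.add hb4).const_mul 8).mono'
        (((hmaae.const_smul _).add (hbm.const_smul _)).norm.pow 4) (ae_of_all _ fun ω => ?_)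
      rw [Real.norm_eq_abs, abs_of_nonneg (by positivity)]
      have h1 : ‖(1 - γ) • a ω + γ • b ω‖ ≤ ‖a ω‖ + ‖b ω‖ := by
        refine (norm_add_le _ _).trans ?_
        rw [norm_smul, norm_smul, Real.norm_eq_abs, Real.norm_eq_abs,
          abs_of_nonneg h1γ, abs_of_nonneg hγ0]
        have := norm_nonneg (a ω); have := norm_nonneg (b ω)
        nlinarith
      calc ‖(1 - γ) • a ω + γ • b ω‖^4 ≤ (‖a ω‖ + ‖b ω‖)^4 :=
            pow_le_pow_left₀ (norm_nonneg _) h1 4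
        _ ≤ 8*(‖a ω‖^4 + ‖b ω‖^4) := aux_add_pow4 _ _ (norm_nonneg _) (norm_nonneg _)
    have hptwise : ∀ ω, ‖(1 - γ) • a ω + γ • b ω‖ ^ 4 ≤
        (1-γ)^4*‖a ω‖^4 + 4*(1-γ)^3*γ*(‖a ω‖^2 * (inner ℝ (a ω) (b ω) : ℝ))
        + 6*(1-γ)^2*γ^2*(‖a ω‖^2 * ‖b ω‖^2)
        + 4*(1-γ)*γ^3*(‖a ω‖ * ‖b ω‖^3) + γ^4*‖b ω‖^4 := by
      intro ω
      have hsq : ‖(1 - γ) • a ω + γ • b ω‖^2 = (1-γ)^2*‖a ω‖^2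
          + 2*((1-γ)*γ*(inner ℝ (a ω) (b ω) : ℝ)) + γ^2*‖b ω‖^2 := by
        rw [norm_add_sq_real, real_inner_smul_left, real_inner_smul_right,
          norm_smul, norm_smul, Real.norm_eq_abs, Real.norm_eq_abs,
          abs_of_nonneg h1γ, abs_of_nonneg hγ0, mul_pow, mul_pow]
        ring
      have h4 : ‖(1 - γ) • a ω + γ • b ω‖^4 = (‖(1 - γ) • a ω + γ • b ω‖^2)^2 := by ring
      rw [h4, hsq]
      have habs := abs_real_inner_le_norm (a ω) (b ω)
      have hp : (inner ℝ (a ω) (b ω) : ℝ) ≤ ‖a ω‖ * ‖b ω‖ := (abs_le.1 habs).2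
      have hp' : -(‖a ω‖ * ‖b ω‖) ≤ (inner ℝ (a ω) (b ω) : ℝ) := (abs_le.1 habs).1
      exact aux_poly_bound γ ‖a ω‖ ‖b ω‖ _ hγ0 hγ1 hp hp'
    calc ∫ ω, ‖(1 - γ) • a ω + γ • b ω‖ ^ 4 ∂P ≤ _ :=
          integral_mono_ae hLint hGint (ae_of_all _ hptwise)
      _ = (1-γ)^4*I1 + 4*(1-γ)^3*γ*T2 + 6*(1-γ)^2*γ^2*T3 + 4*(1-γ)*γ^3*T4 + γ^4*T5 := by
          have i1 : Integrable (fun ω => (1-γ)^4*‖a ω‖^4) P := ha4.const_mul _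
          have i2 : Integrable (fun ω => 4*(1-γ)^3*γ*(‖a ω‖^2 * (inner ℝ (a ω) (b ω) : ℝ))) P :=
            hT2i.const_mul _
          have i3 : Integrable (fun ω => 6*(1-γ)^2*γ^2*(‖a ω‖^2 * ‖b ω‖^2)) P :=
            hT3i.const_mul _
          have i4 : Integrable (fun ω => 4*(1-γ)*γ^3*(‖a ω‖ * ‖b ω‖^3)) P := hT4i.const_mul _
          have i5 : Integrable (fun ω => γ^4*‖b ω‖^4) P := hb4.const_mul _
          have i12 : Integrable (fun ω => (1-γ)^4*‖a ω‖^4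
              + 4*(1-γ)^3*γ*(‖a ω‖^2 * (inner ℝ (a ω) (b ω) : ℝ))) P := i1.add i2
          have i123 : Integrable (fun ω => (1-γ)^4*‖a ω‖^4
              + 4*(1-γ)^3*γ*(‖a ω‖^2 * (inner ℝ (a ω) (b ω) : ℝ))
              + 6*(1-γ)^2*γ^2*(‖a ω‖^2 * ‖b ω‖^2)) P := i12.add i3
          have i1234 : Integrable (fun ω => (1-γ)^4*‖a ω‖^4
              + 4*(1-γ)^3*γ*(‖a ω‖^2 * (inner ℝ (a ω) (b ω) : ℝ))
              + 6*(1-γ)^2*γ^2*(‖a ω‖^2 * ‖b ω‖^2)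
              + 4*(1-γ)*γ^3*(‖a ω‖ * ‖b ω‖^3)) P := i123.add i4
          rw [integral_add i1234 i5, integral_add i123 i4, integral_add i12 i3,
            integral_add i1 i2, integral_const_mul, integral_const_mul, integral_const_mul,
            integral_const_mul, integral_const_mul]
  -- T2 = 0
  have hT2 : T2 = 0 := by
    classical
    set e := stdOrthonormalBasis ℝ E with he
    have hexp : ∀ ω, ‖a ω‖^2 * (inner ℝ (a ω) (b ω) : ℝ) =
        ∑ i, (fun ω' => ‖a ω'‖^2 * (inner ℝ (a ω') (e i) : ℝ)) ω *
          (fun ω' => (inner ℝ (e i) (b ω') : ℝ)) ω := by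
      intro ω
      simp only
      conv_lhs => rw [← e.sum_inner_mul_inner (a ω) (b ω)]
      rw [Finset.mul_sum]
      exact Finset.sum_congr rfl fun i _ => by ring
    have hfiG : ∀ i, StronglyMeasurable[𝒢]
        (fun ω => ‖a ω‖^2 * (inner ℝ (a ω) (e i) : ℝ)) :=
      fun i => (haG.norm.pow 2).mul (haG.inner stronglyMeasurable_const)
    have hgii : ∀ i, Integrable (fun ω => (inner ℝ (e i) (b ω) : ℝ)) P :=
      fun i => hbint.const_inner _
    have hprodi : ∀ i, Integrable
        (fun ω => (‖a ω‖^2 * (inner ℝ (a ω) (e i) : ℝ)) * (inner ℝ (e i) (b ω) : ℝ)) P := by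
      intro i
      refine hdom.mono' (((hmaae.norm.pow 2).mul
        (hmaae.inner aestronglyMeasurable_const)).mul
        (aestronglyMeasurable_const.inner hbm)) (ae_of_all _ fun ω => ?_)
      rw [Real.norm_eq_abs, abs_mul, abs_mul, abs_of_nonneg (by positivity : (0:ℝ) ≤ ‖a ω‖^2)]
      have hei : ‖(e : OrthonormalBasis _ ℝ E) i‖ = 1 := e.orthonormal.1 i
      have h1 : |(inner ℝ (a ω) (e i) : ℝ)| ≤ ‖a ω‖ := by
        have := abs_real_inner_le_norm (a ω) (e i)
        rw [hei, mul_one] at this; exact this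
      have h2 : |(inner ℝ (e i) (b ω) : ℝ)| ≤ ‖b ω‖ := by
        have := abs_real_inner_le_norm (e i) (b ω)
        rw [hei, one_mul] at this; exact this
      have hcube := aux_cube_mul ‖a ω‖ ‖b ω‖ (norm_nonneg _) (norm_nonneg _)
      have hs := norm_nonneg (a ω); have ht := norm_nonneg (b ω)
      have hia := abs_nonneg ((inner ℝ (a ω) (e i) : ℝ))
      have hib := abs_nonneg ((inner ℝ (e i) (b ω) : ℝ))
      nlinarith [mul_le_mul (mul_le_mul_of_nonneg_left h1 (by positivity : (0:ℝ) ≤ ‖a ω‖^2))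
        h2 hib (by positivity : (0:ℝ) ≤ ‖a ω‖^2 * ‖a ω‖)]
    have : T2 = ∑ i, ∫ ω, (‖a ω‖^2 * (inner ℝ (a ω) (e i) : ℝ)) * (inner ℝ (e i) (b ω) : ℝ) ∂P := by
      rw [hT2def]
      rw [integral_congr_ae (ae_of_all _ hexp)]
      exact integral_finset_sum _ fun i _ => hprodi i
    rw [this]
    refine Finset.sum_eq_zero fun i _ => ?_
    exact aux_pull_zero h𝒢 P (hfiG i) (hgii i) (hprodi i)
      (aux_inner_condexp_zero h𝒢 P hbint hbmean (e i))
  -- T3 ≤ V * D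
  have hT3 : T3 ≤ V * D := by
    have h1 : T3 ≤ V * ∫ ω, ‖a ω‖^2 ∂P :=
      aux_pull_le h𝒢 P (haG.norm.pow 2) (fun ω => by positivity) ha2i hb2i hT3i hb2
    calc T3 ≤ V * ∫ ω, ‖a ω‖^2 ∂P := h1
      _ ≤ V * D := mul_le_mul_of_nonneg_left ha2 hV
  -- T5 ≤ V^2
  have hT5 : T5 ≤ V^2 := by
    haveI : SigmaFinite (P.trim h𝒢) := by infer_instance
    calc T5 = ∫ ω, (P[fun ω' => ‖b ω'‖ ^ 4 | 𝒢]) ω ∂P :=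
          (integral_condExp h𝒢 (f := fun ω' => ‖b ω'‖ ^ 4)).symm
      _ ≤ ∫ _ω, V^2 ∂P := integral_mono_ae integrable_condExp (integrable_const _) hb4c
      _ = V^2 := by simp
  -- T4 ≤ sqrt D * (V * sqrt V)
  have hT4 : T4 ≤ Real.sqrt D * (V * Real.sqrt V) := by
    refine aux_opt_lemma (integral_nonneg fun ω => by positivity) hD hV fun δ hδ => ?_
    have hle : ∫ ω, 2*δ*(‖a ω‖ * ‖b ω‖^3) ∂P ≤
        ∫ ω, δ^2*(‖a ω‖^2 * ‖b ω‖^2) + ‖b ω‖^4 ∂P := by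
      refine integral_mono_ae (hT4i.const_mul _) ((hT3i.const_mul _).add hb4)
        (ae_of_all _ fun ω => ?_)
      exact aux_amgm_pt δ ‖a ω‖ ‖b ω‖
    rw [integral_const_mul, integral_add (hT3i.const_mul _) hb4, integral_const_mul] at hle
    have hδ2 : δ^2 * T3 ≤ δ^2 * (V*D) := by
      refine mul_le_mul_of_nonneg_left ?_ (sq_nonneg δ)
      calc T3 ≤ V * D := hT3
        _ = V * D := rfl
    linarith
  -- convert the rpow
  have hV32 : V ^ ((3 : ℝ) / 2) = V * Real.sqrt V := by
    rw [show ((3:ℝ)/2) = 1 + 1/2 by norm_num, Real.rpow_add' hV (by norm_num),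
      Real.rpow_one, ← Real.sqrt_eq_rpow]
  rw [hV32]
  have b3 : 6*(1-γ)^2*γ^2*T3 ≤ 6*(1-γ)^2*γ^2*(V*D) :=
    mul_le_mul_of_nonneg_left hT3 (by positivity)
  have b4 : 4*(1-γ)*γ^3*T4 ≤ 4*(1-γ)*γ^3*(Real.sqrt D * (V * Real.sqrt V)) :=
    mul_le_mul_of_nonneg_left hT4 (by positivity)
  have b5 : γ^4*T5 ≤ γ^4*V^2 := mul_le_mul_of_nonneg_left hT5 (by positivity)
  have b2 : 4*(1-γ)^3*γ*T2 = 0 := by rw [hT2]; ring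
  linarith [stepA, b3, b4, b5, b2]
end

section
/- Let k ∈ ℕ, let ζ_0, …, ζ_k be nonnegative real numbers with ∑_{t=0}^{k} ζ_t = 1, let ŷ_0, …, ŷ_k ∈ E and u_0, …, u_k ∈ F, and set z := ∑_{t=0}^{k} ζ_t·ŷ_t and y := ∑_{t=0}^{k} ζ_t·u_t. Then ‖y − g(z)‖ ≤ (L/2)·∑_{t=0}^{k} ζ_t·‖z − ŷ_t‖² + ‖∑_{t=0}^{k} ζ_t·(u_t − g(ŷ_t))‖. -/
/-!
Write `z = ∑ ζ_t ŷ_t`. Since the weights sum to one and `∑ ζ_t (ŷ_t - z) = 0`, the linear term of the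
first-order Taylor expansion of `g` at `z` cancels in `∑ ζ_t g(ŷ_t) - g(z)`, and each remainder is at most
`(L/2)‖ŷ_t - z‖²` because `Dg` is `L`-Lipschitz. The terms `u_t - g(ŷ_t)` are then split off by the
triangle inequality.
-/

open Finset

section

variable {E F : Type*} [NormedAddCommGroup E] [NormedSpace ℝ E]
  [NormedAddCommGroup F] [NormedSpace ℝ F]

theorem norm_sub_sub_fderiv_le_of_lipschitz_fderiv {g : E → F} {g' : E → E →L[ℝ] F} {L : ℝ}
    (hg : ∀ u, HasFDerivAt g (g' u) u) (hg' : ∀ u v, ‖g' u - g' v‖ ≤ L * ‖u - v‖) (a b : E) :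
    ‖g b - g a - g' a (b - a)‖ ≤ L / 2 * ‖b - a‖ ^ 2 := by
  set v := b - a
  -- the remainder along the segment `t ↦ a + t • v`, bounded by the fence `L ‖v‖² t² / 2`
  let φ : ℝ → F := fun t => g (a + t • v) - g a - t • g' a v
  have hφ : ∀ t, HasDerivAt φ (g' (a + t • v) v - g' a v) t := fun t => by
    have hline : HasDerivAt (fun t : ℝ => a + t • v) v t := by
      simpa using ((hasDerivAt_id t).smul_const v).const_add a
    exact (((hg _).comp_hasDerivAt t hline).sub_const (g a)).sub
      (by simpa using (hasDerivAt_id t).smul_const (g' a v))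
  have hB : ∀ t : ℝ, HasDerivAt (fun t => L * ‖v‖ ^ 2 * (t ^ 2 / 2)) (L * ‖v‖ ^ 2 * t) t :=
    fun t => by
      simpa using (((hasDerivAt_pow 2 t).div_const 2).const_mul (L * ‖v‖ ^ 2)).congr_deriv
        (by push_cast; ring)
  have bound : ∀ t ∈ Set.Ico (0 : ℝ) 1, ‖g' (a + t • v) v - g' a v‖ ≤ L * ‖v‖ ^ 2 * t := by
    rintro t ⟨ht, -⟩
    calc ‖g' (a + t • v) v - g' a v‖ = ‖(g' (a + t • v) - g' a) v‖ := rfl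
      _ ≤ ‖g' (a + t • v) - g' a‖ * ‖v‖ := (g' (a + t • v) - g' a).le_opNorm v
      _ ≤ L * ‖a + t • v - a‖ * ‖v‖ := by gcongr; exact hg' _ _
      _ = L * ‖v‖ ^ 2 * t := by
        rw [add_sub_cancel_left, norm_smul, Real.norm_of_nonneg ht]; ring
  have hφ1 := image_norm_le_of_norm_deriv_right_le_deriv_boundary
    (fun t _ => (hφ t).continuousAt.continuousWithinAt) (fun t _ => (hφ t).hasDerivWithinAt)
    (by simp [φ]) hB bound (Set.right_mem_Icc.2 zero_le_one)
  have hab : a + v = b := add_sub_cancel a b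
  simp only [φ, one_smul, hab, one_pow] at hφ1
  linarith

theorem ContinuousLinearMap.sum_smul_map_sub_sum_smul_eq_zero {ι : Type*} (s : Finset ι)
    (w : ι → ℝ) (hw : ∑ i ∈ s, w i = 1) (y : ι → E) (A : E →L[ℝ] F) :
    ∑ i ∈ s, w i • A (y i - ∑ j ∈ s, w j • y j) = 0 := by
  simp_rw [← A.map_smul, ← map_sum, smul_sub, sum_sub_distrib, ← sum_smul, hw, one_smul, sub_self,
    map_zero]

theorem norm_sum_smul_sub_map_sum_smul_le {ι : Type*} (s : Finset ι) (w : ι → ℝ)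
    (hw₀ : ∀ i ∈ s, 0 ≤ w i) (hw : ∑ i ∈ s, w i = 1) (y : ι → E) {g : E → F}
    {g' : E → E →L[ℝ] F} {L : ℝ} (hg : ∀ u, HasFDerivAt g (g' u) u)
    (hg' : ∀ u v, ‖g' u - g' v‖ ≤ L * ‖u - v‖) :
    ‖∑ i ∈ s, w i • g (y i) - g (∑ j ∈ s, w j • y j)‖ ≤
      L / 2 * ∑ i ∈ s, w i * ‖(∑ j ∈ s, w j • y j) - y i‖ ^ 2 := by
  set z := ∑ j ∈ s, w j • y j
  have hremainder : ∑ i ∈ s, w i • g (y i) - g z =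
      ∑ i ∈ s, w i • (g (y i) - g z - g' z (y i - z)) := by
    have hlin : ∑ i ∈ s, w i • g' z (y i - z) = 0 :=
      (g' z).sum_smul_map_sub_sum_smul_eq_zero s w hw y
    rw [sum_congr rfl fun i _ => smul_sub (w i) _ _, sum_sub_distrib, hlin, sub_zero,
      sum_congr rfl fun i _ => smul_sub (w i) _ _, sum_sub_distrib, ← sum_smul, hw, one_smul]
  calc ‖∑ i ∈ s, w i • g (y i) - g z‖
      ≤ ∑ i ∈ s, ‖w i • (g (y i) - g z - g' z (y i - z))‖ := hremainder ▸ norm_sum_le _ _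
    _ ≤ ∑ i ∈ s, w i * (L / 2 * ‖z - y i‖ ^ 2) := by
      gcongr with i hi
      rw [norm_smul, Real.norm_of_nonneg (hw₀ i hi), norm_sub_rev z]
      exact mul_le_mul_of_nonneg_left
        (norm_sub_sub_fderiv_le_of_lipschitz_fderiv hg hg' z (y i)) (hw₀ i hi)
    _ = L / 2 * ∑ i ∈ s, w i * ‖z - y i‖ ^ 2 := by
      rw [mul_sum]; exact sum_congr rfl fun i _ => by ring

end

theorem stmt_7_general {E F : Type*} [NormedAddCommGroup E] [NormedSpace ℝ E]
    [NormedAddCommGroup F] [NormedSpace ℝ F]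
    (g : E → F) (g' : E → E →L[ℝ] F) (L : ℝ)
    (hg : ∀ u, HasFDerivAt g (g' u) u)
    (hg' : ∀ u v, ‖g' u - g' v‖ ≤ L * ‖u - v‖)
    (k : ℕ) (ζ : ℕ → ℝ) (hζ : ∀ t ∈ Finset.range (k + 1), 0 ≤ ζ t)
    (hζsum : ∑ t ∈ Finset.range (k + 1), ζ t = 1)
    (yhat : ℕ → E) (u : ℕ → F) :
    ‖(∑ t ∈ Finset.range (k + 1), ζ t • u t)
        - g (∑ t ∈ Finset.range (k + 1), ζ t • yhat t)‖ ≤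
      (L / 2) * ∑ t ∈ Finset.range (k + 1),
          ζ t * ‖(∑ s ∈ Finset.range (k + 1), ζ s • yhat s) - yhat t‖ ^ 2
        + ‖∑ t ∈ Finset.range (k + 1), ζ t • (u t - g (yhat t))‖ := by
  set s := Finset.range (k + 1)
  have hsplit : ∑ t ∈ s, ζ t • u t - g (∑ t ∈ s, ζ t • yhat t) =
      (∑ t ∈ s, ζ t • g (yhat t) - g (∑ t ∈ s, ζ t • yhat t)) +
        ∑ t ∈ s, ζ t • (u t - g (yhat t)) := by
    simp only [smul_sub, sum_sub_distrib]; abel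
  rw [hsplit]
  exact (norm_add_le _ _).trans <| add_le_add_left
    (norm_sum_smul_sub_map_sum_smul_le s ζ hζ hζsum yhat hg hg') _

theorem stmt_7 {E F : Type*} [NormedAddCommGroup E] [NormedSpace ℝ E]
    [NormedAddCommGroup F] [NormedSpace ℝ F]
    (g : E → F) (g' : E → E →L[ℝ] F) (L : ℝ) (hL : 0 ≤ L)
    (hg : ∀ u, HasFDerivAt g (g' u) u)
    (hg' : ∀ u v, ‖g' u - g' v‖ ≤ L * ‖u - v‖)
    (k : ℕ) (ζ : ℕ → ℝ) (hζ : ∀ t ∈ Finset.range (k + 1), 0 ≤ ζ t)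
    (hζsum : ∑ t ∈ Finset.range (k + 1), ζ t = 1)
    (yhat : ℕ → E) (u : ℕ → F) :
    ‖(∑ t ∈ Finset.range (k + 1), ζ t • u t)
        - g (∑ t ∈ Finset.range (k + 1), ζ t • yhat t)‖ ≤
      (L / 2) * ∑ t ∈ Finset.range (k + 1),
          ζ t * ‖(∑ s ∈ Finset.range (k + 1), ζ s • yhat s) - yhat t‖ ^ 2
        + ‖∑ t ∈ Finset.range (k + 1), ζ t • (u t - g (yhat t))‖ :=
  stmt_7_general g g' L hg hg' k ζ hζ hζsum yhat u
end

section
/- For every integer k ≥ 1, q_{k+1}² ≤ (1 − β_k)·q_k² + (4/β_k)·‖z_{k+1} − z_k‖². -/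
/-!
The weights `ζ_t^{(k)}` sum to one and satisfy
`ζ_t^{(k)} = (1 - β_k) ζ_t^{(k-1)}` for `t < k`. Splitting off the last term of `q_{k+1}`, that
term equals `(1 - β_k) ‖z_{k+1} - z_k‖` because `ŷ_{k+1}` extrapolates beyond `z_{k+1}`, and the
triangle inequality through `z_k` bounds the rest by `(1 - β_k)(q_k + ‖z_{k+1} - z_k‖)`. Hence
`q_{k+1} ≤ (1 - β_k)(q_k + 2‖z_{k+1} - z_k‖)`, and squaring finishes by the quadratic estimate
`b (1 - b)² (a + 2c)² ≤ b (1 - b) a² + 4c²` for `0 < b ≤ 1`.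
-/

open Finset

lemma sq_one_sub_mul_add_two_mul_le {b : ℝ} (hb0 : 0 < b) (hb1 : b ≤ 1) (a c : ℝ) :
    ((1 - b) * (a + 2 * c)) ^ 2 ≤ (1 - b) * a ^ 2 + (4 / b) * c ^ 2 := by
  rw [← mul_le_mul_iff_right₀ hb0]
  have hexpand : b * ((1 - b) * a ^ 2 + 4 / b * c ^ 2) = b * (1 - b) * a ^ 2 + 4 * c ^ 2 := by
    field_simp
  rw [hexpand]
  nlinarith [mul_nonneg (sub_nonneg.2 hb1) (sq_nonneg (b * a - 2 * (1 - b) * c)),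
    mul_nonneg (mul_nonneg (sq_nonneg c) hb0.le) (by linarith : (0 : ℝ) ≤ 2 - b)]

lemma mul_norm_sub_extrapolate {E : Type*} [NormedAddCommGroup E] [NormedSpace ℝ E] {b : ℝ}
    (hb0 : 0 < b) (hb1 : b ≤ 1) (x y : E) :
    b * ‖y - ((1 - 1 / b) • x + (1 / b) • y)‖ = (1 - b) * ‖y - x‖ := by
  have hsub : y - ((1 - 1 / b) • x + (1 / b) • y) = (1 / b - 1) • (x - y) := by module
  have hcoef : 0 ≤ 1 / b - 1 := sub_nonneg.2 (one_le_one_div hb0 hb1)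
  rw [hsub, norm_smul, Real.norm_of_nonneg hcoef, norm_sub_rev, ← mul_assoc, mul_sub,
    mul_one_div_cancel hb0.ne', mul_one]

/-- The weight `ζ_t^{(k)}`. -/
def extrapolationWeight (β : ℕ → ℝ) (t k : ℕ) : ℝ :=
  β t * ∏ i ∈ Icc (t + 1) k, (1 - β i)

namespace extrapolationWeight

variable {β : ℕ → ℝ}

@[simp]
lemma self (k : ℕ) : extrapolationWeight β k k = β k := by
  simp [extrapolationWeight]

lemma succ {t k : ℕ} (htk : t ≤ k) :
    extrapolationWeight β t (k + 1) = (1 - β (k + 1)) * extrapolationWeight β t k := by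
  rw [extrapolationWeight, extrapolationWeight, prod_Icc_succ_top (by omega)]
  ring

lemma nonneg (hβ : ∀ k, 0 < β k ∧ β k ≤ 1) (t k : ℕ) : 0 ≤ extrapolationWeight β t k :=
  mul_nonneg (hβ t).1.le (prod_nonneg fun i _ => sub_nonneg.2 (hβ i).2)

lemma sum_eq_one (hβ0 : β 0 = 1) (k : ℕ) :
    ∑ t ∈ range (k + 1), extrapolationWeight β t k = 1 := by
  induction k with
  | zero => simp [hβ0]
  | succ k ih =>
    rw [sum_range_succ, self, sum_congr rfl fun t ht => succ (Nat.lt_succ_iff.1 (mem_range.1 ht)),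
      ← mul_sum, ih]
    ring

end extrapolationWeight

/-- `extrapolationResidual β z yhat k` is `q_{k+1}`. -/
def extrapolationResidual {E : Type*} [NormedAddCommGroup E] (β : ℕ → ℝ) (z yhat : ℕ → E)
    (k : ℕ) : ℝ :=
  ∑ t ∈ range (k + 1), extrapolationWeight β t k * ‖z (k + 1) - yhat (t + 1)‖

namespace extrapolationResidual

variable {E : Type*} [NormedAddCommGroup E] {β : ℕ → ℝ} {z yhat : ℕ → E}

lemma nonneg (hβ : ∀ k, 0 < β k ∧ β k ≤ 1) (k : ℕ) : 0 ≤ extrapolationResidual β z yhat k :=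
  sum_nonneg fun t _ => mul_nonneg (extrapolationWeight.nonneg hβ t k) (norm_nonneg _)

lemma succ_le [NormedSpace ℝ E] (hβ0 : β 0 = 1) (hβ : ∀ k, 0 < β k ∧ β k ≤ 1) {k : ℕ}
    (hy : yhat (k + 2) = (1 - 1 / β (k + 1)) • z (k + 1) + (1 / β (k + 1)) • z (k + 2)) :
    extrapolationResidual β z yhat (k + 1) ≤
      (1 - β (k + 1)) * (extrapolationResidual β z yhat k + 2 * ‖z (k + 2) - z (k + 1)‖) := by
  obtain ⟨hb0, hb1⟩ := hβ (k + 1)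
  set d := ‖z (k + 2) - z (k + 1)‖
  have hlast : extrapolationWeight β (k + 1) (k + 1) * ‖z (k + 2) - yhat (k + 2)‖
      = (1 - β (k + 1)) * d := by
    rw [extrapolationWeight.self, hy, mul_norm_sub_extrapolate hb0 hb1]
  have hearlier : ∑ t ∈ range (k + 1), extrapolationWeight β t (k + 1) * ‖z (k + 2) - yhat (t + 1)‖
      ≤ (1 - β (k + 1)) * (extrapolationResidual β z yhat k + d) := calc
    _ ≤ ∑ t ∈ range (k + 1),
          (1 - β (k + 1)) * (extrapolationWeight β t k * (‖z (k + 1) - yhat (t + 1)‖ + d)) := by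
      refine sum_le_sum fun t ht => ?_
      rw [extrapolationWeight.succ (Nat.lt_succ_iff.1 (mem_range.1 ht)), mul_assoc]
      gcongr
      · exact extrapolationWeight.nonneg hβ t k
      · exact (norm_sub_le_norm_sub_add_norm_sub _ (z (k + 1)) _).trans_eq (add_comm _ _)
    _ = (1 - β (k + 1)) * (extrapolationResidual β z yhat k + d) := by
      rw [← mul_sum, extrapolationResidual]
      congr 1
      simp_rw [mul_add, sum_add_distrib, ← sum_mul, extrapolationWeight.sum_eq_one hβ0, one_mul]
  rw [extrapolationResidual, sum_range_succ, hlast]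
  linarith

end extrapolationResidual

theorem stmt_8_general {E : Type*} [NormedAddCommGroup E] [NormedSpace ℝ E]
    (β : ℕ → ℝ) (hβ0 : β 0 = 1) (hβ : ∀ k, 0 < β k ∧ β k ≤ 1)
    (z yhat : ℕ → E)
    (hyhat : ∀ t : ℕ, yhat (t + 1) = (1 - 1 / β t) • z t + (1 / β t) • z (t + 1))
    (ζ : ℕ → ℕ → ℝ)
    (hζ : ∀ t k : ℕ, t ≤ k → ζ t k = β t * ∏ i ∈ Finset.Icc (t + 1) k, (1 - β i))
    (q : ℕ → ℝ)
    (hq : ∀ k : ℕ, q (k + 1) = ∑ t ∈ Finset.range (k + 1), ζ t k * ‖z (k + 1) - yhat (t + 1)‖) :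
    ∀ k : ℕ, 1 ≤ k →
      q (k + 1) ^ 2 ≤ (1 - β k) * q k ^ 2 + (4 / β k) * ‖z (k + 1) - z k‖ ^ 2 := by
  have hq_eq : ∀ k, q (k + 1) = extrapolationResidual β z yhat k := fun k => by
    rw [hq k, extrapolationResidual]
    exact sum_congr rfl fun t ht => by
      rw [hζ t k (Nat.lt_succ_iff.1 (mem_range.1 ht)), extrapolationWeight]
  intro k hk
  obtain ⟨j, rfl⟩ : ∃ j, k = j + 1 := ⟨k - 1, by omega⟩
  obtain ⟨hb0, hb1⟩ := hβ (j + 1)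
  rw [hq_eq, hq_eq]
  calc extrapolationResidual β z yhat (j + 1) ^ 2
      ≤ ((1 - β (j + 1)) * (extrapolationResidual β z yhat j + 2 * ‖z (j + 2) - z (j + 1)‖)) ^ 2 :=
        pow_le_pow_left₀ (extrapolationResidual.nonneg hβ _)
          (extrapolationResidual.succ_le hβ0 hβ (hyhat (j + 1))) 2
    _ ≤ _ := sq_one_sub_mul_add_two_mul_le hb0 hb1 _ _

theorem stmt_8 {E : Type*} [NormedAddCommGroup E] [NormedSpace ℝ E]
    (β : ℕ → ℝ) (hβ0 : β 0 = 1) (hβ : ∀ k, 0 < β k ∧ β k ≤ 1)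
    (z yhat : ℕ → E)
    (hyhat : ∀ t : ℕ, yhat (t + 1) = (1 - 1 / β t) • z t + (1 / β t) • z (t + 1))
    (ζ : ℕ → ℕ → ℝ)
    (hζ : ∀ t k : ℕ, t ≤ k → ζ t k = β t * ∏ i ∈ Finset.Icc (t + 1) k, (1 - β i))
    (q m : ℕ → ℝ)
    (hq : ∀ k : ℕ, q (k + 1) = ∑ t ∈ Finset.range (k + 1), ζ t k * ‖z (k + 1) - yhat (t + 1)‖)
    (hm : ∀ k : ℕ, m (k + 1) = ∑ t ∈ Finset.range (k + 1), ζ t k * ‖z (k + 1) - yhat (t + 1)‖ ^ 2) :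
    ∀ k : ℕ, 1 ≤ k →
      q (k + 1) ^ 2 ≤ (1 - β k) * q k ^ 2 + (4 / β k) * ‖z (k + 1) - z k‖ ^ 2 :=
  stmt_8_general β hβ0 hβ z yhat hyhat ζ hζ q hq
end

section
/- For every integer k ≥ 1, m_{k+1} ≤ (1 − β_k)·m_k + β_k·q_k² + (2/β_k)·‖z_{k+1} − z_k‖². -/
/-!
Split off the newest term `t = k` of `m_{k+1}`: its weight is `β_k` and
`z_{k+1} - ŷ_{k+1} = (1 - 1/β_k) (z_k - z_{k+1})`. The older weights satisfy
`ζ_t^{(k)} = (1 - β_k) ζ_t^{(k-1)}`, and by the triangle inequality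
`‖z_{k+1} - ŷ_{t+1}‖ ≤ ‖z_k - ŷ_{t+1}‖ + ‖z_{k+1} - z_k‖`; expanding the square and using that
the weights sum to at most one bounds the older terms by `(1 - β_k)(m_k + 2 d q_k + d²)`.
What remains is an AM-GM inequality in `β_k`, `q_k` and `d = ‖z_{k+1} - z_k‖`.
-/

open Finset

noncomputable def momentumWeight (β : ℕ → ℝ) (t k : ℕ) : ℝ :=
  β t * ∏ i ∈ Icc (t + 1) k, (1 - β i)

namespace momentumWeight

variable {β : ℕ → ℝ}

lemma nonneg (h0 : ∀ i, 0 ≤ β i) (h1 : ∀ i, β i ≤ 1) (t k : ℕ) :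
    0 ≤ momentumWeight β t k :=
  mul_nonneg (h0 t) (prod_nonneg fun i _ => sub_nonneg.2 (h1 i))

lemma self (k : ℕ) : momentumWeight β k k = β k := by
  simp [momentumWeight]

lemma succ {t k : ℕ} (ht : t ≤ k) :
    momentumWeight β t (k + 1) = (1 - β (k + 1)) * momentumWeight β t k := by
  rw [momentumWeight, momentumWeight, prod_Icc_succ_top (by omega)]
  ring

lemma sum_range (k : ℕ) :
    ∑ t ∈ range (k + 1), momentumWeight β t k = 1 - ∏ i ∈ range (k + 1), (1 - β i) := by
  induction k with
  | zero => simp [self]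
  | succ k ih =>
    rw [sum_range_succ, self, sum_congr rfl fun t ht => succ (Nat.lt_succ_iff.1 (mem_range.1 ht)),
      ← mul_sum, ih, prod_range_succ _ (k + 1)]
    ring

lemma sum_range_le_one (h1 : ∀ i, β i ≤ 1) (k : ℕ) :
    ∑ t ∈ range (k + 1), momentumWeight β t k ≤ 1 := by
  rw [sum_range]
  linarith [prod_nonneg fun i (_ : i ∈ range (k + 1)) => sub_nonneg.2 (h1 i)]

end momentumWeight

lemma norm_sub_extrapolate {E : Type*} [NormedAddCommGroup E] [NormedSpace ℝ E] {b : ℝ}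
    (hb0 : 0 < b) (hb1 : b ≤ 1) (x y : E) :
    ‖y - ((1 - 1 / b) • x + (1 / b) • y)‖ = (1 / b - 1) * ‖y - x‖ := by
  have hb : 0 ≤ 1 / b - 1 := by rw [sub_nonneg, le_div_iff₀ hb0]; linarith
  rw [show y - ((1 - 1 / b) • x + (1 / b) • y) = (1 / b - 1) • (x - y) by module,
    norm_smul, Real.norm_of_nonneg hb, norm_sub_rev]

lemma sum_mul_sq_le_of_le_add {ι : Type*} {s : Finset ι} {w a c : ι → ℝ} (d : ℝ)
    (hw : ∀ i ∈ s, 0 ≤ w i) (hw1 : ∑ i ∈ s, w i ≤ 1)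
    (hc : ∀ i ∈ s, 0 ≤ c i) (hca : ∀ i ∈ s, c i ≤ a i + d) :
    ∑ i ∈ s, w i * c i ^ 2 ≤ ∑ i ∈ s, w i * a i ^ 2 + 2 * d * ∑ i ∈ s, w i * a i + d ^ 2 :=
  calc ∑ i ∈ s, w i * c i ^ 2
      ≤ ∑ i ∈ s, w i * (a i + d) ^ 2 := sum_le_sum fun i hi =>
        mul_le_mul_of_nonneg_left (pow_le_pow_left₀ (hc i hi) (hca i hi) 2) (hw i hi)
    _ = ∑ i ∈ s, w i * a i ^ 2 + 2 * d * ∑ i ∈ s, w i * a i + d ^ 2 * ∑ i ∈ s, w i := by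
        simp only [mul_sum, ← sum_add_distrib]
        exact sum_congr rfl fun i _ => by ring
    _ ≤ _ := by gcongr; exact mul_le_of_le_one_right (sq_nonneg d) hw1

-- The difference of the two sides is `((b q - (1 - b) d)² + b (3 - b) d²) / b`.
lemma one_sub_mul_add_mul_sq_le {b : ℝ} (hb0 : 0 < b) (hb1 : b ≤ 1) (M q d : ℝ) :
    (1 - b) * (M + 2 * d * q + d ^ 2) + b * ((1 / b - 1) * d) ^ 2
      ≤ (1 - b) * M + b * q ^ 2 + 2 / b * d ^ 2 := by
  rw [← sub_nonneg]
  have hsos : (1 - b) * M + b * q ^ 2 + 2 / b * d ^ 2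
      - ((1 - b) * (M + 2 * d * q + d ^ 2) + b * ((1 / b - 1) * d) ^ 2)
      = ((b * q - (1 - b) * d) ^ 2 + b * (3 - b) * d ^ 2) / b := by
    field_simp
    ring
  have : 0 ≤ 3 - b := by linarith
  rw [hsos]
  positivity

theorem stmt_9_general {E : Type*} [NormedAddCommGroup E] [NormedSpace ℝ E]
    (β : ℕ → ℝ) (hβ : ∀ k, 0 < β k ∧ β k ≤ 1)
    (z yhat : ℕ → E)
    (hyhat : ∀ t : ℕ, yhat (t + 1) = (1 - 1 / β t) • z t + (1 / β t) • z (t + 1))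
    (ζ : ℕ → ℕ → ℝ)
    (hζ : ∀ t k : ℕ, t ≤ k → ζ t k = β t * ∏ i ∈ Finset.Icc (t + 1) k, (1 - β i))
    (q m : ℕ → ℝ)
    (hq : ∀ k : ℕ, q (k + 1) = ∑ t ∈ Finset.range (k + 1), ζ t k * ‖z (k + 1) - yhat (t + 1)‖)
    (hm : ∀ k : ℕ, m (k + 1) = ∑ t ∈ Finset.range (k + 1), ζ t k * ‖z (k + 1) - yhat (t + 1)‖ ^ 2) :
    ∀ k : ℕ, 1 ≤ k →
      m (k + 1) ≤ (1 - β k) * m k + β k * q k ^ 2 + (2 / β k) * ‖z (k + 1) - z k‖ ^ 2 := by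
  have hw : ∀ n, ∀ t ∈ range (n + 1), ζ t n = momentumWeight β t n := fun n t ht =>
    hζ t n (Nat.lt_succ_iff.1 (mem_range.1 ht))
  have hm' : ∀ n, m (n + 1) = ∑ t ∈ range (n + 1),
      momentumWeight β t n * ‖z (n + 1) - yhat (t + 1)‖ ^ 2 := fun n => by
    rw [hm]; exact sum_congr rfl fun t ht => by rw [hw n t ht]
  have hq' : ∀ n, q (n + 1) = ∑ t ∈ range (n + 1),
      momentumWeight β t n * ‖z (n + 1) - yhat (t + 1)‖ := fun n => by
    rw [hq]; exact sum_congr rfl fun t ht => by rw [hw n t ht]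
  intro k hk
  obtain ⟨j, rfl⟩ : ∃ j, k = j + 1 := ⟨k - 1, by omega⟩
  obtain ⟨hb0, hb1⟩ := hβ (j + 1)
  set b := β (j + 1)
  set d := ‖z (j + 1 + 1) - z (j + 1)‖
  have hsplit : m (j + 1 + 1) = (1 - b) * ∑ t ∈ range (j + 1),
      momentumWeight β t j * ‖z (j + 1 + 1) - yhat (t + 1)‖ ^ 2 + b * ((1 / b - 1) * d) ^ 2 := by
    rw [hm', sum_range_succ, momentumWeight.self, hyhat, norm_sub_extrapolate hb0 hb1, mul_sum]
    congr 1
    exact sum_congr rfl fun t ht => by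
      rw [momentumWeight.succ (Nat.lt_succ_iff.1 (mem_range.1 ht)), mul_assoc]
  have hpast : ∑ t ∈ range (j + 1), momentumWeight β t j * ‖z (j + 1 + 1) - yhat (t + 1)‖ ^ 2
      ≤ m (j + 1) + 2 * d * q (j + 1) + d ^ 2 := by
    rw [hm', hq']
    refine sum_mul_sq_le_of_le_add d
      (fun t _ => momentumWeight.nonneg (fun i => (hβ i).1.le) (fun i => (hβ i).2) t j)
      (momentumWeight.sum_range_le_one (fun i => (hβ i).2) j) (fun t _ => norm_nonneg _)
      fun t _ => ?_
    linarith [norm_sub_le_norm_sub_add_norm_sub (z (j + 1 + 1)) (z (j + 1)) (yhat (t + 1))]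
  have hb : 0 ≤ 1 - b := by linarith
  rw [hsplit]
  linarith [mul_le_mul_of_nonneg_left hpast hb,
    one_sub_mul_add_mul_sq_le hb0 hb1 (m (j + 1)) (q (j + 1)) d]

theorem stmt_9 {E : Type*} [NormedAddCommGroup E] [NormedSpace ℝ E]
    (β : ℕ → ℝ) (hβ0 : β 0 = 1) (hβ : ∀ k, 0 < β k ∧ β k ≤ 1)
    (z yhat : ℕ → E)
    (hyhat : ∀ t : ℕ, yhat (t + 1) = (1 - 1 / β t) • z t + (1 / β t) • z (t + 1))
    (ζ : ℕ → ℕ → ℝ)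
    (hζ : ∀ t k : ℕ, t ≤ k → ζ t k = β t * ∏ i ∈ Finset.Icc (t + 1) k, (1 - β i))
    (q m : ℕ → ℝ)
    (hq : ∀ k : ℕ, q (k + 1) = ∑ t ∈ Finset.range (k + 1), ζ t k * ‖z (k + 1) - yhat (t + 1)‖)
    (hm : ∀ k : ℕ, m (k + 1) = ∑ t ∈ Finset.range (k + 1), ζ t k * ‖z (k + 1) - yhat (t + 1)‖ ^ 2) :
    ∀ k : ℕ, 1 ≤ k →
      m (k + 1) ≤ (1 - β k) * m k + β k * q k ^ 2 + (2 / β k) * ‖z (k + 1) - z k‖ ^ 2 :=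
  stmt_9_general β hβ z yhat hyhat ζ hζ q m hq hm
end

section
/- Let (α_k)_{k∈ℕ} be positive real numbers with ∑_{k=0}^∞ α_k = ∞, let M > 0, and let (x_k)_{k∈ℕ} be a sequence in ℝⁿ such that ∑_{k=0}^∞ α_k·‖∇F(x_k)‖² < ∞ and ‖x_{k+1} − x_k‖ ≤ M·α_k for all k. Then every cluster point x̄ of the sequence (x_k) satisfies ∇F(x̄) = 0. -/
/-!
Suppose `∇F(x̄) ≠ 0`. By continuity `‖∇F‖² ≥ c > 0` on a ball `B(x̄, r)`. Pick `k₀` with `x_{k₀}`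
close to `x̄` and the tail of `∑ α_k ‖∇F(x_k)‖²` after `k₀` small. As long as the iterates stay in
`B(x̄, r)`, the tail bounds `c · ∑_{k₀ ≤ j < k} α_j`, so the path length `M · ∑ α_j` from `x_{k₀}`
stays below `r / 2`: the iterates never leave the ball. But then `∑ α_k` converges.
-/

open Filter Finset Metric

lemma sum_Ico_le_tsum_nat_add {f : ℕ → ℝ} (hf : Summable f) (hf₀ : ∀ k, 0 ≤ f k) (m k : ℕ) :
    ∑ j ∈ Ico m k, f j ≤ ∑' i, f (i + m) := by
  rw [sum_Ico_eq_sum_range]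
  simp_rw [add_comm m]
  exact ((summable_nat_add_iff m).2 hf).sum_le_tsum _ fun i _ => hf₀ _

section Trapping

variable {X : Type*} [PseudoMetricSpace X]

lemma mem_ball_of_forall_dist_lt {x : ℕ → X} {y : X} {r ρ : ℝ} {k₀ : ℕ}
    (hρ : dist (x k₀) y + ρ ≤ r)
    (hmove : ∀ k, k₀ ≤ k → (∀ j ∈ Ico k₀ k, x j ∈ ball y r) → dist (x k₀) (x k) < ρ) :
    ∀ k, k₀ ≤ k → x k ∈ ball y r := by
  intro k
  induction k using Nat.strong_induction_on with
  | _ k ih =>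
    intro hk
    have hprev : ∀ j ∈ Ico k₀ k, x j ∈ ball y r := fun j hj =>
      ih j (mem_Ico.1 hj).2 (mem_Ico.1 hj).1
    calc dist (x k) y ≤ dist (x k₀) (x k) + dist (x k₀) y := dist_triangle_left _ _ _
      _ < r := by linarith [hmove k hk hprev]

lemma dist_le_mul_sum_Ico {x : ℕ → X} {α : ℕ → ℝ} {M : ℝ}
    (hstep : ∀ k, dist (x (k + 1)) (x k) ≤ M * α k) {m k : ℕ} (hmk : m ≤ k) :
    dist (x m) (x k) ≤ M * ∑ j ∈ Ico m k, α j := by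
  rw [mul_sum]
  exact dist_le_Ico_sum_of_dist_le hmk fun _ _ => (dist_comm _ _).trans_le (hstep _)

theorem eq_zero_of_mapClusterPt_of_summable_mul {φ : X → ℝ} {x : ℕ → X} {α : ℕ → ℝ} {M : ℝ}
    {y : X} (hφ : ∀ z, 0 ≤ φ z) (hφy : ContinuousAt φ y) (hα : ∀ k, 0 ≤ α k)
    (hαsum : Tendsto (fun N => ∑ k ∈ range N, α k) atTop atTop) (hM : 0 < M)
    (hstep : ∀ k, dist (x (k + 1)) (x k) ≤ M * α k)
    (hsum : Summable fun k => α k * φ (x k)) (hy : MapClusterPt y atTop x) : φ y = 0 := by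
  by_contra hne
  have hpos : 0 < φ y := (hφ y).lt_of_ne' hne
  set c := φ y / 2
  obtain ⟨r, hr, hφr⟩ : ∃ r > 0, ∀ {z}, dist z y < r → c < φ z :=
    eventually_nhds_iff.1 (hφy.eventually (lt_mem_nhds (half_lt_self hpos)))
  set B := r / (2 * M)
  have hcB : 0 < c * B := by positivity
  obtain ⟨k₀, hk₀y, hk₀tail⟩ : ∃ k₀, x k₀ ∈ ball y (r / 2) ∧
      ∑' i, α (i + k₀) * φ (x (i + k₀)) < c * B :=
    ((mapClusterPt_iff_frequently.1 hy _ (ball_mem_nhds y (half_pos hr))).and_eventually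
      ((tendsto_sum_nat_add fun k => α k * φ (x k)).eventually (gt_mem_nhds hcB))).exists
  have hsmall : ∀ k, (∀ j ∈ Ico k₀ k, x j ∈ ball y r) → ∑ j ∈ Ico k₀ k, α j < B := by
    intro k hk
    refine lt_of_mul_lt_mul_left ?_ (by positivity : 0 ≤ c)
    calc c * ∑ j ∈ Ico k₀ k, α j = ∑ j ∈ Ico k₀ k, α j * c := by rw [mul_comm, sum_mul]
      _ ≤ ∑ j ∈ Ico k₀ k, α j * φ (x j) :=
        sum_le_sum fun j hj => mul_le_mul_of_nonneg_left (hφr (hk j hj)).le (hα j)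
      _ ≤ ∑' i, α (i + k₀) * φ (x (i + k₀)) :=
        sum_Ico_le_tsum_nat_add hsum (fun k => mul_nonneg (hα k) (hφ _)) k₀ k
      _ < c * B := hk₀tail
  have htrap : ∀ k, k₀ ≤ k → x k ∈ ball y r := by
    refine mem_ball_of_forall_dist_lt (ρ := r / 2) (by linarith [mem_ball.1 hk₀y]) ?_
    intro k hk hball
    calc dist (x k₀) (x k) ≤ M * ∑ j ∈ Ico k₀ k, α j := dist_le_mul_sum_Ico hstep hk
      _ < M * B := by gcongr; exact hsmall k hball
      _ = r / 2 := by simp only [B]; field_simp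
  obtain ⟨k, hk, hk₀k⟩ := ((hαsum.eventually_gt_atTop (∑ j ∈ range k₀, α j + B)).and
    (eventually_ge_atTop k₀)).exists
  have hsum_Ico := hsmall k fun j hj => htrap j (mem_Ico.1 hj).1
  rw [← sum_range_add_sum_Ico _ hk₀k] at hk
  linarith

end Trapping

theorem ContDiff.continuous_gradient {𝕜 E : Type*} [RCLike 𝕜] [NormedAddCommGroup E]
    [InnerProductSpace 𝕜 E] [CompleteSpace E] {f : E → 𝕜} (hf : ContDiff 𝕜 1 f) :
    Continuous (gradient f) :=
  (InnerProductSpace.toDual 𝕜 E).symm.continuous.comp (hf.continuous_fderiv one_ne_zero)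

theorem stmt_12_general {n : ℕ}
    (F : EuclideanSpace ℝ (Fin n) → ℝ) (hF : ContDiff ℝ 1 F)
    (α : ℕ → ℝ) (hα : ∀ k, 0 < α k)
    (hαsum : Tendsto (fun N => ∑ k ∈ Finset.range N, α k) atTop atTop)
    (M : ℝ) (hM : 0 < M)
    (x : ℕ → EuclideanSpace ℝ (Fin n))
    (hsum : Summable (fun k => α k * ‖gradient F (x k)‖ ^ 2))
    (hstep : ∀ k, ‖x (k + 1) - x k‖ ≤ M * α k) :
    ∀ xbar : EuclideanSpace ℝ (Fin n), MapClusterPt xbar atTop x → gradient F xbar = 0 := by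
  intro xbar hcl
  have hφ : Continuous fun y => ‖gradient F y‖ ^ 2 := hF.continuous_gradient.norm.pow 2
  have h := eq_zero_of_mapClusterPt_of_summable_mul (fun _ => sq_nonneg _) hφ.continuousAt
    (fun k => (hα k).le) hαsum hM (fun k => (dist_eq_norm _ _).trans_le (hstep k)) hsum hcl
  simpa using h

theorem stmt_12 {n : ℕ} (hn : 1 ≤ n)
    (F : EuclideanSpace ℝ (Fin n) → ℝ) (hF : ContDiff ℝ 1 F)
    (α : ℕ → ℝ) (hα : ∀ k, 0 < α k)
    (hαsum : Tendsto (fun N => ∑ k ∈ Finset.range N, α k) atTop atTop)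
    (M : ℝ) (hM : 0 < M)
    (x : ℕ → EuclideanSpace ℝ (Fin n))
    (hsum : Summable (fun k => α k * ‖gradient F (x k)‖ ^ 2))
    (hstep : ∀ k, ‖x (k + 1) - x k‖ ≤ M * α k) :
    ∀ xbar : EuclideanSpace ℝ (Fin n), MapClusterPt xbar atTop x → gradient F xbar = 0 :=
  stmt_12_general F hF α hα hαsum M hM x hsum hstep
end

section
/- Let (x_k)_{k∈ℕ} be a sequence of measurable maps Ω → ℝⁿ taking values in 𝒳 such that (i) for every x̃ ∈ X*, almost surely the real sequence (‖x_k − x̃‖)_k converges as k → ∞, and (ii) almost surely lim inf_{k→∞} F(x_k) = F*. Then almost surely there exists a point x̄ ∈ X* (depending on the sample point) such that x_k → x̄. -/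
/-!
Opial's argument, run pathwise. The minimizer set is separable, so it has a countable dense
subset `D`, and almost surely `‖x k ω - d‖` converges for every `d ∈ D` at once. Such a path is
bounded, hence by compactness it has a cluster point at which `F` takes the value
`liminf F (x k ω) = F*`; this cluster point is a minimizer. Approximating it by points of `D`,
convergence of the distances to those points forces the whole path to converge to it.
-/

open Filter Topology MeasureTheory Metric

section ClusterPoints

variable {α X : Type*} [TopologicalSpace X] {f : Filter α} {u : α → X}

theorem MapClusterPt.eq_of_tendsto [T2Space X] {a b : X} (ha : MapClusterPt a f u)
    (hu : Tendsto u f (𝓝 b)) : a = b :=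
  eq_of_nhds_neBot (ha.clusterPt.mono hu)

theorem IsCompact.exists_mapClusterPt_of_mapClusterPt_comp {Y : Type*} [TopologicalSpace Y]
    [T2Space Y] {K : Set X} (hK : IsCompact K) (huK : ∀ᶠ k in f, u k ∈ K) {g : X → Y}
    (hg : Continuous g) {c : Y} (hc : MapClusterPt c f (g ∘ u)) :
    ∃ a ∈ K, MapClusterPt a f u ∧ g a = c := by
  -- Cluster points of `u` along `f` restricted to where `g ∘ u` is near `c`.
  have : NeBot (comap (g ∘ u) (𝓝 c) ⊓ f) := neBot_inf_comap_iff_map'.2 hc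
  obtain ⟨a, haK, ha⟩ := hK.exists_mapClusterPt (f := comap (g ∘ u) (𝓝 c) ⊓ f)
    (tendsto_principal.2 (huK.filter_mono inf_le_right))
  exact ⟨a, haK, ha.mono inf_le_right,
    (ha.continuousAt_comp hg.continuousAt).eq_of_tendsto (tendsto_comap.mono_left inf_le_left)⟩

end ClusterPoints

section Opial

variable {α X : Type*} [PseudoMetricSpace X] {f : Filter α} {u : α → X}

/-- Opial's lemma. -/
theorem tendsto_of_mapClusterPt_of_tendsto_dist {a : X} {D : Set X} (ha : MapClusterPt a f u)
    (haD : a ∈ closure D) (hdist : ∀ d ∈ D, ∃ l, Tendsto (fun k => dist (u k) d) f (𝓝 l)) :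
    Tendsto u f (𝓝 a) := by
  have hlim : ∀ d ∈ D, Tendsto (fun k => dist (u k) d) f (𝓝 (dist a d)) := by
    intro d hd
    obtain ⟨l, hl⟩ := hdist d hd
    have hcl : MapClusterPt (dist a d) f (fun k => dist (u k) d) :=
      ha.continuousAt_comp (continuous_id.dist continuous_const).continuousAt
    rwa [hcl.eq_of_tendsto hl]
  refine Metric.tendsto_nhds.2 fun ε hε => ?_
  obtain ⟨d, hd, had⟩ := mem_closure_iff.1 haD (ε / 3) (by positivity)
  filter_upwards [(hlim d hd).eventually_lt_const (show dist a d < 2 * ε / 3 by linarith)]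
    with k hk
  calc dist (u k) a ≤ dist (u k) d + dist a d := dist_triangle_right _ _ _
    _ < ε := by linarith

theorem exists_tendsto_of_tendsto_dist_of_liminf_eq [ProperSpace X] [NeBot f] {K D : Set X}
    {g : X → ℝ} {c : ℝ} (hK : IsClosed K) (hg : Continuous g) (hD : D.Nonempty)
    (hKD : {y ∈ K | g y = c} ⊆ closure D) (huK : ∀ᶠ k in f, u k ∈ K)
    (hdist : ∀ d ∈ D, ∃ l, Tendsto (fun k => dist (u k) d) f (𝓝 l))
    (hliminf : liminf (g ∘ u) f = c) :
    ∃ a ∈ {y ∈ K | g y = c}, Tendsto u f (𝓝 a) := by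
  obtain ⟨d, hd⟩ := hD
  obtain ⟨l, hl⟩ := hdist d hd
  set B := K ∩ closedBall d (l + 1)
  have hB : IsCompact B := (isCompact_closedBall d (l + 1)).inter_left hK
  have huB : ∀ᶠ k in f, u k ∈ B :=
    huK.and ((hl.eventually_lt_const (lt_add_one l)).mono fun _ hk => mem_closedBall.2 hk.le)
  obtain ⟨m, hm⟩ := (hB.image hg).bddBelow
  obtain ⟨M, hM⟩ := (hB.image hg).bddAbove
  have hc : MapClusterPt c f (g ∘ u) := hliminf ▸ MapClusterPt.liminf
    (isCoboundedUnder_ge_of_eventually_le f (huB.mono fun k hk => hM ⟨u k, hk, rfl⟩))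
    (isBoundedUnder_of_eventually_ge (huB.mono fun k hk => hm ⟨u k, hk, rfl⟩))
  obtain ⟨a, haB, ha, hga⟩ := hB.exists_mapClusterPt_of_mapClusterPt_comp huB hg hc
  exact ⟨a, ⟨haB.1, hga⟩, tendsto_of_mapClusterPt_of_tendsto_dist ha (hKD ⟨haB.1, hga⟩) hdist⟩

end Opial

theorem stmt_15_general {Ω : Type*} [MeasurableSpace Ω] (P : Measure Ω)
    {n : ℕ}
    (𝒳 : Set (EuclideanSpace ℝ (Fin n))) (h𝒳cl : IsClosed 𝒳)
    (F : EuclideanSpace ℝ (Fin n) → ℝ) (hF : Continuous F)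
    (Fstar : ℝ) (hFstar : IsLeast (F '' 𝒳) Fstar)
    (x : ℕ → Ω → EuclideanSpace ℝ (Fin n))
    (hx𝒳 : ∀ k ω, x k ω ∈ 𝒳)
    (hconv : ∀ xt ∈ {y ∈ 𝒳 | F y = Fstar}, ∀ᵐ ω ∂P, ∃ l : ℝ,
      Tendsto (fun k => ‖x k ω - xt‖) atTop (nhds l))
    (hliminf : ∀ᵐ ω ∂P, liminf (fun k => F (x k ω)) atTop = Fstar) :
    ∀ᵐ ω ∂P, ∃ xbar ∈ {y ∈ 𝒳 | F y = Fstar},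
      Tendsto (fun k => x k ω) atTop (nhds xbar) := by
  obtain ⟨D, hDsub, hDcount, hDdense⟩ := (TopologicalSpace.IsSeparable.of_separableSpace
    {y ∈ 𝒳 | F y = Fstar}).exists_countable_dense_subset
  have hDne : D.Nonempty := by
    obtain ⟨y, hy𝒳, hFy⟩ := hFstar.1
    exact closure_nonempty_iff.1 ⟨y, hDdense ⟨hy𝒳, hFy⟩⟩
  filter_upwards [(ae_ball_iff hDcount).2 fun d hd => hconv d (hDsub hd), hliminf]
    with ω hdist hlim
  refine exists_tendsto_of_tendsto_dist_of_liminf_eq h𝒳cl hF hDne hDdense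
    (.of_forall (hx𝒳 · ω)) ?_ hlim
  simpa only [dist_eq_norm] using hdist

theorem stmt_15 {Ω : Type*} [MeasurableSpace Ω] (P : Measure Ω) [IsProbabilityMeasure P]
    {n : ℕ} (hn : 1 ≤ n)
    (𝒳 : Set (EuclideanSpace ℝ (Fin n))) (h𝒳ne : 𝒳.Nonempty) (h𝒳cl : IsClosed 𝒳)
    (h𝒳cv : Convex ℝ 𝒳)
    (F : EuclideanSpace ℝ (Fin n) → ℝ) (hF : Continuous F)
    (hFcv : ConvexOn ℝ Set.univ F)
    (Fstar : ℝ) (hFstar : IsLeast (F '' 𝒳) Fstar)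
    (x : ℕ → Ω → EuclideanSpace ℝ (Fin n))
    (hxm : ∀ k, Measurable (x k)) (hx𝒳 : ∀ k ω, x k ω ∈ 𝒳)
    (hconv : ∀ xt ∈ {y ∈ 𝒳 | F y = Fstar}, ∀ᵐ ω ∂P, ∃ l : ℝ,
      Tendsto (fun k => ‖x k ω - xt‖) atTop (nhds l))
    (hliminf : ∀ᵐ ω ∂P, liminf (fun k => F (x k ω)) atTop = Fstar) :
    ∀ᵐ ω ∂P, ∃ xbar ∈ {y ∈ 𝒳 | F y = Fstar},
      Tendsto (fun k => x k ω) atTop (nhds xbar) :=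
  stmt_15_general P 𝒳 h𝒳cl F hF Fstar hFstar x hx𝒳 hconv hliminf
end
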